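/- arXiv:2305.15625 — 7 statements merged into one kernel-verified Lean document; each statement's English description precedes it below -/
import Mathlib

section
/- Let G = (V, E) be a finite simple claw-free graph with an operator realization. Then for all k, l ≥ 0, every token-sliding class μ of size-k independent sets of G, and every token-sliding class ν of size-l independent sets of G, the token-sliding charges commute: Q_{k,μ}(G)·Q_{l,ν}(G) = Q_{l,ν}(G)·Q_{k,μ}(G). (Theorem 1(i).) -/
open scoped Classical

universe u
set_option linter.unusedSectionVars false

/-- `G` is claw-free: no vertex has three pairwise distinct, pairwise non-adjacent neighbors. -/
def ClawFree {V : Type u} (G : SimpleGraph V) : Prop :=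
  ¬ ∃ c x y z : V, x ≠ y ∧ x ≠ z ∧ y ≠ z ∧
    G.Adj c x ∧ G.Adj c y ∧ G.Adj c z ∧ ¬ G.Adj x y ∧ ¬ G.Adj x z ∧ ¬ G.Adj y z

/-- `S` is an independent set of `G`. -/
def IsIndep {V : Type u} (G : SimpleGraph V) (S : Finset V) : Prop :=
  ∀ u ∈ S, ∀ v ∈ S, ¬ G.Adj u v

/-- The product `h(S) = ∏_{v ∈ S} h v`, well defined when the factors pairwise commute. -/
noncomputable def hProd {V : Type u} {d : ℕ} (h : V → Matrix (Fin d) (Fin d) ℂ)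
    (S : Finset V) : Matrix (Fin d) (Fin d) ℂ :=
  if hc : (S : Set V).Pairwise fun u v => Commute (h u) (h v) then S.noncommProd h hc
  else 0

/-- Two independent sets are related by a token slide. -/
def TokenSlide {V : Type u} [DecidableEq V] (G : SimpleGraph V) (S S' : Finset V) : Prop :=
  IsIndep G S ∧ IsIndep G S' ∧
    ∃ u v, G.Adj u v ∧ u ∈ S ∧ u ∉ S' ∧ v ∈ S' ∧ v ∉ S ∧ S' = insert v (S.erase u)

/-- `μ` is a token-sliding class of size-`k` independent sets of `G`: the equivalence class
of some size-`k` independent set `S₀` under the equivalence relation generated by token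
slides. -/
def IsTokenClass {V : Type u} [Fintype V] [DecidableEq V] (G : SimpleGraph V) (k : ℕ)
    (μ : Finset (Finset V)) : Prop :=
  ∃ S₀ : Finset V, IsIndep G S₀ ∧ S₀.card = k ∧
    ∀ S, S ∈ μ ↔ Relation.EqvGen (TokenSlide G) S₀ S

/-- The token-sliding charge `Q_{k,μ}(G) = Σ_{S ∈ μ} h(S)`. -/
noncomputable def tokenCharge {V : Type u} {d : ℕ} (h : V → Matrix (Fin d) (Fin d) ℂ)
    (μ : Finset (Finset V)) : Matrix (Fin d) (Fin d) ℂ :=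
  ∑ S ∈ μ, hProd h S

section Aux

variable {V : Type u} [Fintype V] [DecidableEq V] (G : SimpleGraph V)

/-- the "bipartite" relation between `S` and `T`. -/
def bRel (S T : Finset V) (u v : V) : Prop :=
  G.Adj u v ∧ ((u ∈ S ∧ v ∈ T) ∨ (u ∈ T ∧ v ∈ S))

lemma bRel_symm (S T : Finset V) : Symmetric (bRel G S T) := by
  rintro u v ⟨h1, h2⟩
  exact ⟨h1.symm, by tauto⟩

lemma bRel_comm (S T : Finset V) : bRel G S T = bRel G T S := by
  funext u v
  unfold bRel
  exact propext (by tauto)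

/-- the connected component of `w` in the bipartite graph between `S` and `T`. -/
noncomputable def bComp (S T : Finset V) (w : V) : Finset V :=
  Finset.univ.filter (fun x => Relation.ReflTransGen (bRel G S T) w x)

lemma mem_bComp {S T : Finset V} {w x : V} :
    x ∈ bComp G S T w ↔ Relation.ReflTransGen (bRel G S T) w x := by
  simp [bComp]

lemma self_mem_bComp {S T : Finset V} {w : V} : w ∈ bComp G S T w :=
  (mem_bComp G).2 .refl

lemma bComp_closed {S T : Finset V} {w x y : V} (hx : x ∈ bComp G S T w)
    (hxy : bRel G S T x y) : y ∈ bComp G S T w :=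
  (mem_bComp G).2 (((mem_bComp G).1 hx).tail hxy)

lemma bComp_eq_of_mem {S T : Finset V} {w x : V} (hx : x ∈ bComp G S T w) :
    bComp G S T x = bComp G S T w := by
  rw [mem_bComp] at hx
  ext y
  rw [mem_bComp, mem_bComp]
  constructor
  · exact fun hy => hx.trans hy
  · exact fun hy => (haveI : Std.Symm (bRel G S T) := ⟨bRel_symm G S T⟩
      Std.Symm.symm (r := Relation.ReflTransGen (bRel G S T)) _ _ hx).trans hy

/-- number of neighbours of `a` in `B`, counted as a sum. -/
noncomputable def bdeg (a : V) (B : Finset V) : ℕ :=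
  ∑ y ∈ B, if G.Adj a y then 1 else 0

lemma bdeg_eq_card (a : V) (B : Finset V) :
    bdeg G a B = (B.filter (fun y => G.Adj a y)).card := by
  rw [bdeg, Finset.card_filter]

/-- number of edges between `A` and `B`. -/
noncomputable def ecnt (A B : Finset V) : ℕ := ∑ x ∈ A, bdeg G x B

lemma ecnt_comm (A B : Finset V) : ecnt G A B = ecnt G B A := by
  unfold ecnt bdeg
  rw [Finset.sum_comm]
  exact Finset.sum_congr rfl fun y _ => Finset.sum_congr rfl fun x _ => by
    rw [G.adj_comm]

lemma ecnt_eq_zero {A B : Finset V} (h : ∀ a ∈ A, ∀ b ∈ B, ¬ G.Adj a b) :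
    ecnt G A B = 0 := by
  unfold ecnt bdeg
  refine Finset.sum_eq_zero fun x hx => Finset.sum_eq_zero fun y hy => ?_
  rw [if_neg (h x hx y hy)]

lemma exists_adj_of_ecnt_ne_zero {A B : Finset V} (h : ecnt G A B ≠ 0) :
    ∃ a ∈ A, ∃ b ∈ B, G.Adj a b := by
  by_contra hc
  push_neg at hc
  exact h (ecnt_eq_zero G hc)

lemma exists_odd_bdeg {A B : Finset V} (h : Odd (ecnt G A B)) :
    ∃ a ∈ A, Odd (bdeg G a B) := by
  by_contra hc
  push_neg at hc
  simp only [Nat.not_odd_iff_even] at hc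
  rw [← Nat.not_even_iff_odd] at h
  exact h (Finset.even_sum _ hc)

/-- claw-freeness: a vertex has at most two neighbours in an independent set. -/
lemma card_nbrs_le_two (hcf : ClawFree G) {T : Finset V} (hT : IsIndep G T) (a : V) :
    (T.filter (fun y => G.Adj a y)).card ≤ 2 := by
  by_contra hc
  push_neg at hc
  obtain ⟨x, hx, y, hy, z, hz, hxy, hxz, hyz⟩ := Finset.two_lt_card.1 hc
  simp only [Finset.mem_filter] at hx hy hz
  exact hcf ⟨a, x, y, z, hxy, hxz, hyz, hx.2, hy.2, hz.2,
    hT x hx.1 y hy.1, hT x hx.1 z hz.1, hT y hy.1 z hz.1⟩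

end Aux

section Sign

variable {V : Type u} [Fintype V] [DecidableEq V] (G : SimpleGraph V)
variable {d : ℕ} (h : V → Matrix (Fin d) (Fin d) ℂ)

lemma pairwise_commute_of_indep
    (hcomm : ∀ u v, u ≠ v → ¬ G.Adj u v → h u * h v = h v * h u)
    {S : Finset V} (hS : IsIndep G S) :
    (S : Set V).Pairwise fun u v => Commute (h u) (h v) := by
  intro u hu v hv huv
  exact hcomm u v huv (hS u hu v hv)

lemma hProd_of_indep
    (hcomm : ∀ u v, u ≠ v → ¬ G.Adj u v → h u * h v = h v * h u)
    {S : Finset V} (hS : IsIndep G S) :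
    hProd h S = S.noncommProd h (pairwise_commute_of_indep G h hcomm hS) :=
  dif_pos _

lemma indep_subset {S S' : Finset V} (hsub : S' ⊆ S) (hS : IsIndep G S) : IsIndep G S' :=
  fun u hu v hv => hS u (hsub hu) v (hsub hv)

lemma hProd_empty : hProd h (∅ : Finset V) = 1 := by
  rw [hProd, dif_pos (by simp)]
  exact Finset.noncommProd_empty _ _

lemma hProd_insert
    (hcomm : ∀ u v, u ≠ v → ¬ G.Adj u v → h u * h v = h v * h u)
    {a : V} {B : Finset V} (ha : a ∉ B) (hind : IsIndep G (insert a B)) :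
    hProd h (insert a B) = h a * hProd h B := by
  rw [hProd_of_indep G h hcomm hind,
    hProd_of_indep G h hcomm (indep_subset G (Finset.subset_insert a B) hind),
    Finset.noncommProd_insert_of_notMem _ _ _ _ ha]

lemma hProd_union
    (hcomm : ∀ u v, u ≠ v → ¬ G.Adj u v → h u * h v = h v * h u)
    {A B : Finset V} (hd : Disjoint A B) (hind : IsIndep G (A ∪ B)) :
    hProd h (A ∪ B) = hProd h A * hProd h B := by
  rw [hProd_of_indep G h hcomm hind,
    hProd_of_indep G h hcomm (indep_subset G Finset.subset_union_left hind),
    hProd_of_indep G h hcomm (indep_subset G Finset.subset_union_right hind)]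
  exact Finset.noncommProd_union_of_disjoint hd _ _

lemma h_swap_single
    (hanti : ∀ u v, G.Adj u v → h u * h v = -(h v * h u))
    (hcomm : ∀ u v, u ≠ v → ¬ G.Adj u v → h u * h v = h v * h u)
    (a b : V) :
    h a * h b = ((-1 : ℂ) ^ (if G.Adj a b then 1 else 0)) • (h b * h a) := by
  by_cases hab : G.Adj a b
  · rw [if_pos hab, pow_one, hanti a b hab, neg_one_smul]
  · rw [if_neg hab, pow_zero, one_smul]
    by_cases heq : a = b
    · rw [heq]
    · exact hcomm a b heq hab

lemma hProd_swap_single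
    (hanti : ∀ u v, G.Adj u v → h u * h v = -(h v * h u))
    (hcomm : ∀ u v, u ≠ v → ¬ G.Adj u v → h u * h v = h v * h u)
    (a : V) (B : Finset V) (hB : IsIndep G B) :
    h a * hProd h B = ((-1 : ℂ) ^ (bdeg G a B)) • (hProd h B * h a) := by
  induction B using Finset.induction_on with
  | empty => simp [hProd_empty, bdeg]
  | @insert b B hb ih =>
    have hBind : IsIndep G B := indep_subset G (Finset.subset_insert b B) hB
    have hb' : bdeg G a (insert b B) = (if G.Adj a b then 1 else 0) + bdeg G a B := by
      unfold bdeg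
      rw [Finset.sum_insert hb]
    rw [hProd_insert G h hcomm hb hB, ← mul_assoc,
      h_swap_single G h hanti hcomm a b, smul_mul_assoc, mul_assoc,
      ih hBind, mul_smul_comm, smul_smul, ← pow_add, ← hb', ← mul_assoc]

lemma hProd_swap
    (hanti : ∀ u v, G.Adj u v → h u * h v = -(h v * h u))
    (hcomm : ∀ u v, u ≠ v → ¬ G.Adj u v → h u * h v = h v * h u)
    (A B : Finset V) (hA : IsIndep G A) (hB : IsIndep G B) :
    hProd h A * hProd h B = ((-1 : ℂ) ^ (ecnt G A B)) • (hProd h B * hProd h A) := by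
  induction A using Finset.induction_on with
  | empty => simp [hProd_empty, ecnt]
  | @insert a A ha ih =>
    have hAind : IsIndep G A := indep_subset G (Finset.subset_insert a A) hA
    have he : ecnt G (insert a A) B = ecnt G A B + bdeg G a B := by
      unfold ecnt
      rw [Finset.sum_insert ha, Nat.add_comm]
    rw [hProd_insert G h hcomm ha hA, mul_assoc, ih hAind, mul_smul_comm, ← mul_assoc,
      hProd_swap_single G h hanti hcomm a B hB, smul_mul_assoc, smul_smul,
      ← pow_add, ← he, mul_assoc]

lemma hProd_comm_of_no_adj
    (hanti : ∀ u v, G.Adj u v → h u * h v = -(h v * h u))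
    (hcomm : ∀ u v, u ≠ v → ¬ G.Adj u v → h u * h v = h v * h u)
    {A B : Finset V} (hA : IsIndep G A) (hB : IsIndep G B)
    (hno : ∀ a ∈ A, ∀ b ∈ B, ¬ G.Adj a b) :
    hProd h A * hProd h B = hProd h B * hProd h A := by
  rw [hProd_swap G h hanti hcomm A B hA hB, ecnt_eq_zero G hno, pow_zero, one_smul]

lemma hProd_anticomm_of_odd
    (hanti : ∀ u v, G.Adj u v → h u * h v = -(h v * h u))
    (hcomm : ∀ u v, u ≠ v → ¬ G.Adj u v → h u * h v = h v * h u)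
    {A B : Finset V} (hA : IsIndep G A) (hB : IsIndep G B)
    (hodd : Odd (ecnt G A B)) :
    hProd h A * hProd h B = -(hProd h B * hProd h A) := by
  rw [hProd_swap G h hanti hcomm A B hA hB, hodd.neg_one_pow, neg_one_smul]

lemma hProd_comm_of_even
    (hanti : ∀ u v, G.Adj u v → h u * h v = -(h v * h u))
    (hcomm : ∀ u v, u ≠ v → ¬ G.Adj u v → h u * h v = h v * h u)
    {A B : Finset V} (hA : IsIndep G A) (hB : IsIndep G B)
    (heven : Even (ecnt G A B)) :
    hProd h A * hProd h B = hProd h B * hProd h A := by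
  rw [hProd_swap G h hanti hcomm A B hA hB, heven.neg_one_pow, one_smul]

end Sign


section Comp

variable {V : Type u} [Fintype V] [DecidableEq V] (G : SimpleGraph V)

lemma ecnt_split (S T : Finset V) (w : V) :
    ecnt G S T =
      ecnt G (bComp G S T w ∩ S) (bComp G S T w ∩ T) +
        ecnt G (S \ bComp G S T w) (T \ bComp G S T w) := by
  set C := bComp G S T w with hC
  have h1 : ∀ x ∈ C ∩ S, bdeg G x T = bdeg G x (C ∩ T) := by
    intro x hx
    rw [Finset.mem_inter] at hx
    unfold bdeg
    refine (Finset.sum_subset Finset.inter_subset_right fun y hy hy' => ?_).symm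
    rw [if_neg]
    intro hadj
    exact hy' (Finset.mem_inter.2 ⟨bComp_closed G hx.1 ⟨hadj, Or.inl ⟨hx.2, hy⟩⟩, hy⟩)
  have h2 : ∀ x ∈ S \ C, bdeg G x T = bdeg G x (T \ C) := by
    intro x hx
    rw [Finset.mem_sdiff] at hx
    unfold bdeg
    refine (Finset.sum_subset Finset.sdiff_subset fun y hy hy' => ?_).symm
    rw [if_neg]
    intro hadj
    have hyC : y ∈ C := by
      by_contra hyc
      exact hy' (Finset.mem_sdiff.2 ⟨hy, hyc⟩)
    exact hx.2 (bComp_closed G hyC ⟨hadj.symm, Or.inr ⟨hy, hx.1⟩⟩)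
  have key : ∑ x ∈ S ∩ C, bdeg G x T + ∑ x ∈ S \ C, bdeg G x T = ecnt G S T :=
    Finset.sum_inter_add_sum_sdiff S C _
  rw [← key]
  unfold ecnt
  congr 1
  · rw [Finset.inter_comm S C]
    exact Finset.sum_congr rfl h1
  · exact Finset.sum_congr rfl h2

lemma bComp_disjoint {S T : Finset V} {w w' : V} (hw' : w' ∉ bComp G S T w) {x : V}
    (hx : x ∈ bComp G S T w') : x ∉ bComp G S T w := by
  intro hx'
  have e1 := bComp_eq_of_mem G hx
  have e2 := bComp_eq_of_mem G hx'
  have hww : w' ∈ bComp G S T x := by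
    rw [e1]
    exact self_mem_bComp G
  rw [e2] at hww
  exact hw' hww

lemma exists_odd_component_aux :
    ∀ n : ℕ, ∀ S T : Finset V, S.card ≤ n → Odd (ecnt G S T) →
      ∃ w, Odd (ecnt G (bComp G S T w ∩ S) (bComp G S T w ∩ T)) := by
  intro n
  induction n with
  | zero =>
    intro S T hcard hodd
    rw [Finset.card_eq_zero.1 (Nat.le_zero.1 hcard)] at hodd
    simp [ecnt] at hodd
  | succ n ih =>
    intro S T hcard hodd
    have hne : ecnt G S T ≠ 0 := by
      intro h0
      rw [h0] at hodd
      simp at hodd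
    obtain ⟨a, haS, b, hbT, hab⟩ := exists_adj_of_ecnt_ne_zero G hne
    set C := bComp G S T a with hCdef
    have haC : a ∈ C := self_mem_bComp G
    have hsplit := ecnt_split G S T a
    rw [← hCdef] at hsplit
    by_cases h1 : Odd (ecnt G (C ∩ S) (C ∩ T))
    · exact ⟨a, h1⟩
    · have h2 : Odd (ecnt G (S \ C) (T \ C)) := by
        rw [Nat.odd_iff] at hodd ⊢
        rw [Nat.not_odd_iff_even, Nat.even_iff] at h1
        omega
      have hcard2 : (S \ C).card ≤ n := by
        have hlt : (S \ C).card < S.card :=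
          Finset.card_lt_card ⟨Finset.sdiff_subset, fun hsub =>
            (Finset.mem_sdiff.1 (hsub haS)).2 haC⟩
        omega
      obtain ⟨w, hw⟩ := ih (S \ C) (T \ C) hcard2 h2
      set C' := bComp G (S \ C) (T \ C) w with hC'def
      by_cases hwC : w ∈ C
      · exfalso
        have hstep : ∀ x, ¬ bRel G (S \ C) (T \ C) w x := by
          rintro x ⟨_, h | h⟩
          · exact (Finset.mem_sdiff.1 h.1).2 hwC
          · exact (Finset.mem_sdiff.1 h.1).2 hwC
        have hC'w : ∀ x ∈ C', x = w := by
          intro x hx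
          rcases (Relation.ReflTransGen.cases_head ((mem_bComp G).1 hx)) with h | ⟨c, hc, _⟩
          · exact h.symm
          · exact absurd hc (hstep c)
        have : C' ∩ (S \ C) = ∅ := by
          rw [Finset.eq_empty_iff_forall_notMem]
          intro x hx
          rw [Finset.mem_inter] at hx
          have := hC'w x hx.1
          subst this
          exact (Finset.mem_sdiff.1 hx.2).2 hwC
        rw [this] at hw
        rw [show ecnt G ∅ (C' ∩ (T \ C)) = 0 from Finset.sum_empty] at hw
        simp at hw
      · -- w outside C : components agree
        have hCw_out : ∀ x ∈ bComp G S T w, x ∉ C := fun x hx =>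
          bComp_disjoint G hwC hx
        have hsub1 : C' ⊆ bComp G S T w := by
          intro x hx
          rw [mem_bComp] at hx ⊢
          exact Relation.ReflTransGen.mono (r := bRel G (S \ C) (T \ C)) (p := bRel G S T) (fun u v huv =>
            ⟨huv.1, by
              rcases huv.2 with h | h
              · exact Or.inl ⟨(Finset.mem_sdiff.1 h.1).1, (Finset.mem_sdiff.1 h.2).1⟩
              · exact Or.inr ⟨(Finset.mem_sdiff.1 h.1).1, (Finset.mem_sdiff.1 h.2).1⟩⟩) _ _ hx
        have hsub2 : bComp G S T w ⊆ C' := by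
          intro x hx
          rw [mem_bComp] at hx ⊢
          induction hx with
          | refl => exact .refl
          | @tail y x hwy hyx ihx =>
            refine .tail ihx ?_
            have hyC : y ∉ C := hCw_out y ((mem_bComp G).2 hwy)
            have hxC : x ∉ C := hCw_out x ((mem_bComp G).2 (hwy.tail hyx))
            refine ⟨hyx.1, ?_⟩
            rcases hyx.2 with h | h
            · exact Or.inl ⟨Finset.mem_sdiff.2 ⟨h.1, hyC⟩, Finset.mem_sdiff.2 ⟨h.2, hxC⟩⟩
            · exact Or.inr ⟨Finset.mem_sdiff.2 ⟨h.1, hyC⟩, Finset.mem_sdiff.2 ⟨h.2, hxC⟩⟩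
        have hCC' : C' = bComp G S T w := Finset.Subset.antisymm hsub1 hsub2
        refine ⟨w, ?_⟩
        have e1 : bComp G S T w ∩ S = C' ∩ (S \ C) := by
          rw [← hCC']
          ext x
          simp only [Finset.mem_inter, Finset.mem_sdiff]
          constructor
          · intro hx
            exact ⟨hx.1, hx.2, hCw_out x (hCC' ▸ hx.1)⟩
          · intro hx
            exact ⟨hx.1, hx.2.1⟩
        have e2 : bComp G S T w ∩ T = C' ∩ (T \ C) := by
          rw [← hCC']
          ext x
          simp only [Finset.mem_inter, Finset.mem_sdiff]
          constructor
          · intro hx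
            exact ⟨hx.1, hx.2, hCw_out x (hCC' ▸ hx.1)⟩
          · intro hx
            exact ⟨hx.1, hx.2.1⟩
        rw [e1, e2]
        exact hw

lemma exists_odd_component {S T : Finset V} (hodd : Odd (ecnt G S T)) :
    ∃ w, Odd (ecnt G (bComp G S T w ∩ S) (bComp G S T w ∩ T)) :=
  exists_odd_component_aux G S.card S T le_rfl hodd

end Comp


section Swap

variable {V : Type u} [Fintype V] [DecidableEq V] (G : SimpleGraph V)

lemma bComp_comm (S T : Finset V) (w : V) : bComp G T S w = bComp G S T w := by
  unfold bComp
  rw [bRel_comm G T S]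

lemma indep_swap {S T : Finset V} (hS : IsIndep G S) (hT : IsIndep G T) (w : V) :
    IsIndep G ((S \ bComp G S T w) ∪ (bComp G S T w ∩ T)) := by
  set C := bComp G S T w
  intro u hu v hv hadj
  rw [Finset.mem_union] at hu hv
  rcases hu with hu | hu <;> rcases hv with hv | hv
  · exact hS u (Finset.mem_sdiff.1 hu).1 v (Finset.mem_sdiff.1 hv).1 hadj
  · rw [Finset.mem_sdiff] at hu
    rw [Finset.mem_inter] at hv
    exact hu.2 (bComp_closed G hv.1 ⟨hadj.symm, Or.inr ⟨hv.2, hu.1⟩⟩)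
  · rw [Finset.mem_sdiff] at hv
    rw [Finset.mem_inter] at hu
    exact hv.2 (bComp_closed G hu.1 ⟨hadj, Or.inr ⟨hu.2, hv.1⟩⟩)
  · exact hT u (Finset.mem_inter.1 hu).2 v (Finset.mem_inter.1 hv).2 hadj

lemma bRel_swap {S T : Finset V} (hS : IsIndep G S) (hT : IsIndep G T) (w : V) :
    bRel G ((S \ bComp G S T w) ∪ (bComp G S T w ∩ T))
      ((T \ bComp G S T w) ∪ (bComp G S T w ∩ S)) = bRel G S T := by
  set C := bComp G S T w with hC
  have fwd : ∀ u v, G.Adj u v → u ∈ (S \ C) ∪ (C ∩ T) → v ∈ (T \ C) ∪ (C ∩ S) →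
      bRel G S T u v := by
    intro u v hadj hu hv
    rw [Finset.mem_union] at hu hv
    rcases hu with hu | hu <;> rcases hv with hv | hv
    · exact ⟨hadj, Or.inl ⟨(Finset.mem_sdiff.1 hu).1, (Finset.mem_sdiff.1 hv).1⟩⟩
    · exact absurd hadj (hS u (Finset.mem_sdiff.1 hu).1 v (Finset.mem_inter.1 hv).2)
    · exact absurd hadj (hT u (Finset.mem_inter.1 hu).2 v (Finset.mem_sdiff.1 hv).1)
    · exact ⟨hadj, Or.inr ⟨(Finset.mem_inter.1 hu).2, (Finset.mem_inter.1 hv).2⟩⟩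
  have bwd : ∀ u v, G.Adj u v → u ∈ S → v ∈ T →
      bRel G ((S \ C) ∪ (C ∩ T)) ((T \ C) ∪ (C ∩ S)) u v := by
    intro u v hadj hu hv
    refine ⟨hadj, ?_⟩
    by_cases huC : u ∈ C
    · have hvC : v ∈ C := bComp_closed G huC ⟨hadj, Or.inl ⟨hu, hv⟩⟩
      exact Or.inr ⟨Finset.mem_union_right _ (Finset.mem_inter.2 ⟨huC, hu⟩),
        Finset.mem_union_right _ (Finset.mem_inter.2 ⟨hvC, hv⟩)⟩
    · have hvC : v ∉ C := fun hvC => huC (bComp_closed G hvC ⟨hadj.symm, Or.inr ⟨hv, hu⟩⟩)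
      exact Or.inl ⟨Finset.mem_union_left _ (Finset.mem_sdiff.2 ⟨hu, huC⟩),
        Finset.mem_union_left _ (Finset.mem_sdiff.2 ⟨hv, hvC⟩)⟩
  funext u v
  apply propext
  constructor
  · rintro ⟨hadj, hh | hh⟩
    · exact fwd u v hadj hh.1 hh.2
    · exact bRel_symm G S T (fwd v u hadj.symm hh.2 hh.1)
  · rintro ⟨hadj, hh | hh⟩
    · exact bwd u v hadj hh.1 hh.2
    · exact bRel_symm G _ _ (bwd v u hadj.symm hh.2 hh.1)

lemma bComp_swap {S T : Finset V} (hS : IsIndep G S) (hT : IsIndep G T) (w w' : V) :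
    bComp G ((S \ bComp G S T w) ∪ (bComp G S T w ∩ T))
      ((T \ bComp G S T w) ∪ (bComp G S T w ∩ S)) w' = bComp G S T w' := by
  show Finset.univ.filter
      (fun x => Relation.ReflTransGen
        (bRel G ((S \ bComp G S T w) ∪ (bComp G S T w ∩ T))
          ((T \ bComp G S T w) ∪ (bComp G S T w ∩ S))) w' x) = bComp G S T w'
  rw [bRel_swap G hS hT w]
  rfl

/-- vertices whose component has an odd number of `S`–`T` edges -/
noncomputable def oddSet (S T : Finset V) : Finset V :=
  Finset.univ.filter fun w => Odd (ecnt G (bComp G S T w ∩ S) (bComp G S T w ∩ T))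

lemma oddSet_swap {S T : Finset V} (hS : IsIndep G S) (hT : IsIndep G T) (w : V) :
    oddSet G ((S \ bComp G S T w) ∪ (bComp G S T w ∩ T))
      ((T \ bComp G S T w) ∪ (bComp G S T w ∩ S)) = oddSet G S T := by
  unfold oddSet
  apply Finset.filter_congr
  intro w' _
  rw [bComp_swap G hS hT w w']
  set C := bComp G S T w with hC
  set D := bComp G S T w' with hD
  by_cases hw' : w' ∈ C
  · have hDC : D = C := bComp_eq_of_mem G hw'
    have e1 : D ∩ ((S \ C) ∪ (C ∩ T)) = C ∩ T := by
      rw [hDC]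
      ext x
      simp only [Finset.mem_inter, Finset.mem_union, Finset.mem_sdiff]
      tauto
    have e2 : D ∩ ((T \ C) ∪ (C ∩ S)) = C ∩ S := by
      rw [hDC]
      ext x
      simp only [Finset.mem_inter, Finset.mem_union, Finset.mem_sdiff]
      tauto
    rw [e1, e2, hDC, ecnt_comm]
  · have hdisj : ∀ x ∈ D, x ∉ C := fun x hx => bComp_disjoint G hw' hx
    have e1 : D ∩ ((S \ C) ∪ (C ∩ T)) = D ∩ S := by
      ext x
      simp only [Finset.mem_inter, Finset.mem_union, Finset.mem_sdiff]
      constructor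
      · rintro ⟨hxD, hh | hh⟩
        · exact ⟨hxD, hh.1⟩
        · exact absurd hh.1 (hdisj x hxD)
      · intro hx
        exact ⟨hx.1, Or.inl ⟨hx.2, hdisj x hx.1⟩⟩
    have e2 : D ∩ ((T \ C) ∪ (C ∩ S)) = D ∩ T := by
      ext x
      simp only [Finset.mem_inter, Finset.mem_union, Finset.mem_sdiff]
      constructor
      · rintro ⟨hxD, hh | hh⟩
        · exact ⟨hxD, hh.1⟩
        · exact absurd hh.1 (hdisj x hxD)
      · intro hx
        exact ⟨hx.1, Or.inl ⟨hx.2, hdisj x hx.1⟩⟩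
    rw [e1, e2]

lemma swap_swap (S T C : Finset V) :
    ((((S \ C) ∪ (C ∩ T)) \ C) ∪ (C ∩ ((T \ C) ∪ (C ∩ S)))) = S := by
  ext x
  simp only [Finset.mem_union, Finset.mem_sdiff, Finset.mem_inter]
  tauto

lemma hProd_cancel {d : ℕ} (h : V → Matrix (Fin d) (Fin d) ℂ)
    (hanti : ∀ u v, G.Adj u v → h u * h v = -(h v * h u))
    (hcomm : ∀ u v, u ≠ v → ¬ G.Adj u v → h u * h v = h v * h u)
    {S T : Finset V} (hS : IsIndep G S) (hT : IsIndep G T) (w : V)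
    (hodd : Odd (ecnt G (bComp G S T w ∩ S) (bComp G S T w ∩ T))) :
    hProd h ((S \ bComp G S T w) ∪ (bComp G S T w ∩ T)) *
      hProd h ((T \ bComp G S T w) ∪ (bComp G S T w ∩ S)) = -(hProd h S * hProd h T) := by
  set C := bComp G S T w with hC
  have hSd : (S \ C) ∪ (C ∩ S) = S := by
    ext x
    simp only [Finset.mem_union, Finset.mem_sdiff, Finset.mem_inter]
    tauto
  have hTd : (C ∩ T) ∪ (T \ C) = T := by
    ext x
    simp only [Finset.mem_union, Finset.mem_sdiff, Finset.mem_inter]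
    tauto
  have d1 : Disjoint (S \ C) (C ∩ S) := by
    rw [Finset.disjoint_left]
    intro x hx hx'
    exact (Finset.mem_sdiff.1 hx).2 (Finset.mem_inter.1 hx').1
  have d2 : Disjoint (S \ C) (C ∩ T) := by
    rw [Finset.disjoint_left]
    intro x hx hx'
    exact (Finset.mem_sdiff.1 hx).2 (Finset.mem_inter.1 hx').1
  have d3 : Disjoint (C ∩ T) (T \ C) := by
    rw [Finset.disjoint_left]
    intro x hx hx'
    exact (Finset.mem_sdiff.1 hx').2 (Finset.mem_inter.1 hx).1
  have d4 : Disjoint (C ∩ S) (T \ C) := by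
    rw [Finset.disjoint_left]
    intro x hx hx'
    exact (Finset.mem_sdiff.1 hx').2 (Finset.mem_inter.1 hx).1
  have hS' : IsIndep G ((S \ C) ∪ (C ∩ T)) := indep_swap G hS hT w
  have hT' : IsIndep G ((T \ C) ∪ (C ∩ S)) := by
    have := indep_swap G hT hS w
    rwa [bComp_comm G S T w] at this
  have hT'' : IsIndep G ((C ∩ S) ∪ (T \ C)) := by
    rwa [Finset.union_comm] at hT'
  have pS : hProd h S = hProd h (S \ C) * hProd h (C ∩ S) := by
    have hind : IsIndep G ((S \ C) ∪ (C ∩ S)) := by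
      rw [hSd]
      exact hS
    rw [← hProd_union G h hcomm d1 hind, hSd]
  have pT : hProd h T = hProd h (C ∩ T) * hProd h (T \ C) := by
    have hind : IsIndep G ((C ∩ T) ∪ (T \ C)) := by
      rw [hTd]
      exact hT
    rw [← hProd_union G h hcomm d3 hind, hTd]
  have pS' : hProd h ((S \ C) ∪ (C ∩ T)) = hProd h (S \ C) * hProd h (C ∩ T) :=
    hProd_union G h hcomm d2 hS'
  have pT' : hProd h ((T \ C) ∪ (C ∩ S)) = hProd h (C ∩ S) * hProd h (T \ C) := by
    rw [Finset.union_comm]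
    exact hProd_union G h hcomm d4 hT''
  have key : hProd h (C ∩ S) * hProd h (C ∩ T) = -(hProd h (C ∩ T) * hProd h (C ∩ S)) :=
    hProd_anticomm_of_odd G h hanti hcomm
      (indep_subset G Finset.inter_subset_right hS)
      (indep_subset G Finset.inter_subset_right hT) hodd
  have key' : hProd h (C ∩ T) * hProd h (C ∩ S) = -(hProd h (C ∩ S) * hProd h (C ∩ T)) := by
    rw [key, neg_neg]
  rw [pS', pT', pS, pT]
  simp only [mul_assoc]
  rw [← mul_assoc (hProd h (C ∩ T)) (hProd h (C ∩ S)), key']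
  simp only [neg_mul, mul_neg, mul_assoc]

end Swap


section Reach

variable {V : Type u} [Fintype V] [DecidableEq V] (G : SimpleGraph V)

lemma reach_aux (hcf : ClawFree G) (T : Finset V) (hT : IsIndep G T) :
    ∀ n : ℕ, ∀ S : Finset V, ∀ w : V, IsIndep G S →
      (bComp G S T w).card ≤ n →
      Odd (ecnt G (bComp G S T w ∩ S) (bComp G S T w ∩ T)) →
      Relation.EqvGen (TokenSlide G) S ((S \ bComp G S T w) ∪ (bComp G S T w ∩ T)) := by
  intro n
  induction n with
  | zero =>
    intro S w hS hcard hodd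
    have : (0 : ℕ) < (bComp G S T w).card := Finset.card_pos.2 ⟨w, self_mem_bComp G⟩
    omega
  | succ n ih =>
    intro S w hS hcard hodd
    set C := bComp G S T w with hC
    have hodd' : Odd (ecnt G (C ∩ T) (C ∩ S)) := by rwa [ecnt_comm]
    obtain ⟨bb, hbbCT, hbdeg⟩ := exists_odd_bdeg G hodd'
    have hbC : bb ∈ C := (Finset.mem_inter.1 hbbCT).1
    have hbT : bb ∈ T := (Finset.mem_inter.1 hbbCT).2
    set Nb := S.filter (fun x => G.Adj bb x) with hNbdef
    have hNbsub : Nb = (C ∩ S).filter (fun x => G.Adj bb x) := by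
      ext x
      simp only [hNbdef, Finset.mem_filter, Finset.mem_inter]
      constructor
      · intro hx
        exact ⟨⟨bComp_closed G hbC ⟨hx.2, Or.inr ⟨hbT, hx.1⟩⟩, hx.1⟩, hx.2⟩
      · intro hx
        exact ⟨hx.1.2, hx.2⟩
    have hNbcard : Nb.card = 1 := by
      have h1 : bdeg G bb (C ∩ S) = Nb.card := by
        rw [bdeg_eq_card, hNbsub]
      have h2 : Nb.card ≤ 2 := card_nbrs_le_two G hcf hS bb
      rw [h1, Nat.odd_iff] at hbdeg
      omega
    obtain ⟨a, hNa⟩ := Finset.card_eq_one.1 hNbcard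
    have haNb : a ∈ Nb := by
      rw [hNa]
      exact Finset.mem_singleton_self a
    have haS : a ∈ S := (Finset.mem_filter.1 haNb).1
    have hba : G.Adj bb a := (Finset.mem_filter.1 haNb).2
    have haC : a ∈ C := by
      have : a ∈ (C ∩ S).filter (fun x => G.Adj bb x) := by
        rw [← hNbsub]
        exact haNb
      exact (Finset.mem_inter.1 (Finset.mem_filter.1 this).1).1
    have hbS : bb ∉ S := fun hbS => hS bb hbS a haS hba
    have haT : a ∉ T := fun haT => hT bb hbT a haT hba
    have hne : a ≠ bb := (G.ne_of_adj hba).symm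
    set S1 := insert bb (S.erase a) with hS1def
    have hNb_mem : ∀ x ∈ S, G.Adj bb x → x = a := by
      intro x hx hadj
      have : x ∈ Nb := Finset.mem_filter.2 ⟨hx, hadj⟩
      rw [hNa] at this
      exact Finset.mem_singleton.1 this
    have hS1 : IsIndep G S1 := by
      intro u hu v hv hadj
      rw [hS1def, Finset.mem_insert] at hu hv
      rcases hu with rfl | hu <;> rcases hv with rfl | hv
      · exact hadj.ne rfl
      · have hv' : v ∈ S := Finset.mem_of_mem_erase hv
        exact Finset.ne_of_mem_erase hv (hNb_mem v hv' hadj)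
      · have hu' : u ∈ S := Finset.mem_of_mem_erase hu
        exact Finset.ne_of_mem_erase hu (hNb_mem u hu' hadj.symm)
      · exact hS u (Finset.mem_of_mem_erase hu) v (Finset.mem_of_mem_erase hv) hadj
    have haS1 : a ∉ S1 := by
      rw [hS1def, Finset.mem_insert]
      rintro (rfl | ha)
      · exact hne rfl
      · exact Finset.ne_of_mem_erase ha rfl
    have hslide : TokenSlide G S S1 :=
      ⟨hS, hS1, a, bb, hba.symm, haS, haS1, Finset.mem_insert_self _ _, hbS, rfl⟩
    set Na := T.filter (fun y => G.Adj a y) with hNadef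
    have hbNa : bb ∈ Na := Finset.mem_filter.2 ⟨hbT, hba.symm⟩
    have hNa2 : Na.card ≤ 2 := card_nbrs_le_two G hcf hT a
    have hRa : ∀ x, bRel G S T a x → x ∈ Na := by
      rintro x ⟨hadj, hm | hm⟩
      · exact Finset.mem_filter.2 ⟨hm.2, hadj⟩
      · exact absurd hm.1 haT
    have hRb : ∀ x, bRel G S T bb x → x = a := by
      rintro x ⟨hadj, hm | hm⟩
      · exact absurd hm.1 hbS
      · exact hNb_mem x hm.2 hadj
    have hNaC : ∀ y ∈ Na, y ∈ C := by
      intro y hy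
      have hy' := Finset.mem_filter.1 hy
      exact bComp_closed G haC ⟨hy'.2, Or.inl ⟨haS, hy'.1⟩⟩
    have hCa : bComp G S T a = C := bComp_eq_of_mem G haC
    by_cases hbase : Na = {bb}
    · -- base case : the component is {a, bb}
      have hCab : ∀ x, Relation.ReflTransGen (bRel G S T) a x → x = a ∨ x = bb := by
        intro x hx
        induction hx with
        | refl => exact Or.inl rfl
        | @tail y z hay hyz ihy =>
          rcases ihy with rfl | rfl
          · have : z ∈ Na := hRa z hyz
            rw [hbase] at this
            exact Or.inr (Finset.mem_singleton.1 this)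
          · exact Or.inl (hRb z hyz)
      have hCsub : ∀ x ∈ C, x = a ∨ x = bb := by
        intro x hx
        have : x ∈ bComp G S T a := by rw [hCa]; exact hx
        exact hCab x ((mem_bComp G).1 this)
      have e1 : S \ C = S.erase a := by
        ext x
        rw [Finset.mem_sdiff, Finset.mem_erase]
        constructor
        · intro hx
          exact ⟨fun hxa => hx.2 (hxa ▸ haC), hx.1⟩
        · intro hx
          refine ⟨hx.2, fun hxC => ?_⟩
          rcases hCsub x hxC with rfl | rfl
          · exact hx.1 rfl
          · exact hbS hx.2
      have e2 : C ∩ T = {bb} := by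
        ext x
        rw [Finset.mem_inter, Finset.mem_singleton]
        constructor
        · intro hx
          rcases hCsub x hx.1 with rfl | rfl
          · exact absurd hx.2 haT
          · rfl
        · rintro rfl
          exact ⟨hbC, hbT⟩
      rw [e1, e2, Finset.union_comm, ← Finset.insert_eq]
      exact Relation.EqvGen.rel _ _ hslide
    · -- inductive step
      have hb2ex : ∃ b2 ∈ Na, b2 ≠ bb := by
        by_contra hcon
        push_neg at hcon
        exact hbase (Finset.Subset.antisymm
          (fun x hx => Finset.mem_singleton.2 (hcon x hx))
          (Finset.singleton_subset_iff.2 hbNa))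
      obtain ⟨b2, hb2Na, hb2ne⟩ := hb2ex
      have hNa_eq : Na = {bb, b2} := by
        have hsub : ({bb, b2} : Finset V) ⊆ Na := by
          intro x hx
          rcases Finset.mem_insert.1 hx with rfl | hx
          · exact hbNa
          · rw [Finset.mem_singleton.1 hx]
            exact hb2Na
        have hcard2 : ({bb, b2} : Finset V).card = 2 := Finset.card_pair hb2ne.symm
        exact (Finset.eq_of_subset_of_card_le hsub (by rw [hcard2]; exact hNa2)).symm
      have hb2T : b2 ∈ T := (Finset.mem_filter.1 hb2Na).1
      have hab2 : G.Adj a b2 := (Finset.mem_filter.1 hb2Na).2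
      have hb2C : b2 ∈ C := hNaC b2 hb2Na
      have hb2a : b2 ≠ a := fun e => haT (e ▸ hb2T)
      have hR1 : ∀ u v, bRel G S1 T u v ↔ bRel G S T u v ∧ u ≠ a ∧ v ≠ a := by
        intro u v
        constructor
        · rintro ⟨hadj, hm | hm⟩
          · rcases Finset.mem_insert.1 hm.1 with rfl | hu
            · exact absurd hadj (hT u hbT v hm.2)
            · exact ⟨⟨hadj, Or.inl ⟨Finset.mem_of_mem_erase hu, hm.2⟩⟩,
                Finset.ne_of_mem_erase hu, fun e => haT (e ▸ hm.2)⟩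
          · rcases Finset.mem_insert.1 hm.2 with rfl | hv
            · exact absurd hadj (hT u hm.1 v hbT)
            · exact ⟨⟨hadj, Or.inr ⟨hm.1, Finset.mem_of_mem_erase hv⟩⟩,
                fun e => haT (e ▸ hm.1), Finset.ne_of_mem_erase hv⟩
        · rintro ⟨⟨hadj, hm | hm⟩, hua, hva⟩
          · exact ⟨hadj, Or.inl ⟨Finset.mem_insert_of_mem (Finset.mem_erase.2 ⟨hua, hm.1⟩),
              hm.2⟩⟩
          · exact ⟨hadj, Or.inr ⟨hm.1,
              Finset.mem_insert_of_mem (Finset.mem_erase.2 ⟨hva, hm.2⟩)⟩⟩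
      have hNA : ∀ x, Relation.ReflTransGen (bRel G S1 T) b2 x → x ≠ a ∧ x ≠ bb := by
        intro x hx
        induction hx with
        | refl => exact ⟨hb2a, hb2ne⟩
        | @tail y z hby hyz ihy =>
          have hz_ne_a : z ≠ a := ((hR1 y z).1 hyz).2.2
          refine ⟨hz_ne_a, ?_⟩
          rintro rfl
          exact ihy.1 (hRb y (bRel_symm G S T ((hR1 y z).1 hyz).1))
      have hFWD : ∀ x, Relation.ReflTransGen (bRel G S T) a x →
          x = a ∨ x = bb ∨ Relation.ReflTransGen (bRel G S1 T) b2 x := by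
        intro x hx
        induction hx with
        | refl => exact Or.inl rfl
        | @tail y z hay hyz ihy =>
          rcases ihy with rfl | rfl | hy
          · have hzNa : z ∈ Na := hRa z hyz
            rw [hNa_eq] at hzNa
            rcases Finset.mem_insert.1 hzNa with rfl | hz2
            · exact Or.inr (Or.inl rfl)
            · rw [Finset.mem_singleton] at hz2
              subst hz2
              exact Or.inr (Or.inr .refl)
          · exact Or.inl (hRb z hyz)
          · by_cases hza : z = a
            · exact Or.inl hza
            by_cases hzb : z = bb
            · exact Or.inr (Or.inl hzb)
            · exact Or.inr (Or.inr (hy.tail ((hR1 y z).2 ⟨hyz, (hNA y hy).1, hza⟩)))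
      set C1 := bComp G S1 T b2 with hC1def
      have hC1 : ∀ x, x ∈ C1 ↔ x ∈ C ∧ x ≠ a ∧ x ≠ bb := by
        intro x
        constructor
        · intro hx
          have hx' : Relation.ReflTransGen (bRel G S1 T) b2 x := by
            rw [hC1def] at hx
            exact (mem_bComp G).1 hx
          have hxC : x ∈ C := by
            have hmono : Relation.ReflTransGen (bRel G S T) b2 x :=
              Relation.ReflTransGen.mono (r := bRel G S1 T) (p := bRel G S T) (fun u v huv => ((hR1 u v).1 huv).1) _ _ hx'
            have hb2C' : bComp G S T b2 = C := bComp_eq_of_mem G hb2C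
            rw [← hb2C']
            exact (mem_bComp G).2 hmono
          exact ⟨hxC, hNA x hx'⟩
        · rintro ⟨hxC, hxa, hxb⟩
          have hxa' : Relation.ReflTransGen (bRel G S T) a x := by
            have : x ∈ bComp G S T a := by rw [hCa]; exact hxC
            exact (mem_bComp G).1 this
          rcases hFWD x hxa' with rfl | rfl | hrtg
          · exact absurd rfl hxa
          · exact absurd rfl hxb
          · rw [hC1def]
            exact (mem_bComp G).2 hrtg
      have eS1 : C1 ∩ S1 = (C ∩ S).erase a := by
        ext x
        rw [Finset.mem_inter, hC1 x, Finset.mem_erase, Finset.mem_inter, hS1def,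
          Finset.mem_insert]
        constructor
        · rintro ⟨⟨hxC, hxa, hxb⟩, rfl | hx⟩
          · exact absurd rfl hxb
          · exact ⟨hxa, hxC, Finset.mem_of_mem_erase hx⟩
        · rintro ⟨hxa, hxC, hxS⟩
          exact ⟨⟨hxC, hxa, fun e => hbS (e ▸ hxS)⟩,
            Or.inr (Finset.mem_erase.2 ⟨hxa, hxS⟩)⟩
      have eT1 : C1 ∩ T = (C ∩ T).erase bb := by
        ext x
        rw [Finset.mem_inter, hC1 x, Finset.mem_erase, Finset.mem_inter]
        constructor
        · rintro ⟨⟨hxC, hxa, hxb⟩, hxT⟩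
          exact ⟨hxb, hxC, hxT⟩
        · rintro ⟨hxb, hxC, hxT⟩
          exact ⟨⟨hxC, fun e => haT (e ▸ hxT), hxb⟩, hxT⟩
      -- edge counting
      have hNa_filter : (C ∩ T).filter (fun y => G.Adj a y) = Na := by
        ext y
        simp only [Finset.mem_filter, Finset.mem_inter]
        constructor
        · intro hy
          exact Finset.mem_filter.2 ⟨hy.1.2, hy.2⟩
        · intro hy
          have hy' := Finset.mem_filter.1 hy
          exact ⟨⟨hNaC y hy, hy'.1⟩, hy'.2⟩
      have hbdeg_a : bdeg G a (C ∩ T) = 2 := by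
        rw [bdeg_eq_card, hNa_filter, hNa_eq]
        exact Finset.card_pair hb2ne.symm
      have hrow : ∀ x ∈ (C ∩ S).erase a, bdeg G x ((C ∩ T).erase bb) = bdeg G x (C ∩ T) := by
        intro x hx
        have hxa := Finset.ne_of_mem_erase hx
        have hxS := (Finset.mem_inter.1 (Finset.mem_of_mem_erase hx)).2
        unfold bdeg
        refine Finset.sum_erase _ ?_
        rw [if_neg]
        intro hadj
        exact hxa (hNb_mem x hxS hadj.symm)
      have hodd1 : Odd (ecnt G ((C ∩ S).erase a) ((C ∩ T).erase bb)) := by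
        have e1 : ecnt G ((C ∩ S).erase a) ((C ∩ T).erase bb)
            = ecnt G ((C ∩ S).erase a) (C ∩ T) :=
          Finset.sum_congr rfl hrow
        have e2 : ecnt G ((C ∩ S).erase a) (C ∩ T) + bdeg G a (C ∩ T)
            = ecnt G (C ∩ S) (C ∩ T) :=
          Finset.sum_erase_add _ _ (Finset.mem_inter.2 ⟨haC, haS⟩)
        rw [Nat.odd_iff] at hodd ⊢
        rw [e1]
        omega
      have hcard1 : C1.card ≤ n := by
        have hsubC1 : C1 ⊆ C.erase a := by
          intro x hx
          rw [hC1 x] at hx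
          exact Finset.mem_erase.2 ⟨hx.2.1, hx.1⟩
        have h1 := Finset.card_le_card hsubC1
        have h2 : (C.erase a).card = C.card - 1 := Finset.card_erase_of_mem haC
        omega
      have hrec := ih S1 b2 hS1 hcard1 (by rw [eS1, eT1]; exact hodd1)
      have etarget : (S1 \ C1) ∪ (C1 ∩ T) = (S \ C) ∪ (C ∩ T) := by
        ext x
        simp only [Finset.mem_union, Finset.mem_sdiff, Finset.mem_inter, hC1 x, hS1def,
          Finset.mem_insert, Finset.mem_erase]
        constructor
        · intro hx'
          rcases hx' with ⟨hxS1, hnC1⟩ | ⟨⟨hxC, hxa, hxb⟩, hxT⟩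
          · rcases hxS1 with rfl | ⟨hxa, hxS⟩
            · exact Or.inr ⟨hbC, hbT⟩
            · by_cases hxC : x ∈ C
              · have hxbb : x = bb := by
                  by_contra hxb
                  exact hnC1 ⟨hxC, hxa, hxb⟩
                exact absurd (hxbb ▸ hxS) hbS
              · exact Or.inl ⟨hxS, hxC⟩
          · exact Or.inr ⟨hxC, hxT⟩
        · intro hx'
          rcases hx' with ⟨hxS, hxC⟩ | ⟨hxC, hxT⟩
          · by_cases hxa : x = a
            · exact absurd (hxa ▸ haC) (hxa ▸ hxC)
            · exact Or.inl ⟨Or.inr ⟨hxa, hxS⟩, fun hc => hxC hc.1⟩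
          · by_cases hxb : x = bb
            · subst hxb
              exact Or.inl ⟨Or.inl rfl, fun hc => hc.2.2 rfl⟩
            · by_cases hxa : x = a
              · exact absurd (hxa ▸ hxT) (hxa ▸ haT)
              · exact Or.inr ⟨⟨hxC, hxa, hxb⟩, hxT⟩
      rw [← etarget]
      exact Relation.EqvGen.trans _ _ _ (Relation.EqvGen.rel _ _ hslide) hrec

end Reach


section Assemble

variable {V : Type u} [Fintype V] [DecidableEq V] (G : SimpleGraph V)

lemma choose_congr {s t : Finset V} (hst : s = t) (hs : s.Nonempty) (ht : t.Nonempty) :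
    hs.choose = ht.choose := by
  subst hst
  rfl

/-- the involution on pairs of independent sets -/
noncomputable def swapPair (p : Finset V × Finset V) : Finset V × Finset V :=
  if hne : (oddSet G p.1 p.2).Nonempty then
    ((p.1 \ bComp G p.1 p.2 hne.choose) ∪ (bComp G p.1 p.2 hne.choose ∩ p.2),
     (p.2 \ bComp G p.1 p.2 hne.choose) ∪ (bComp G p.1 p.2 hne.choose ∩ p.1))
  else p

lemma swapPair_pos (p : Finset V × Finset V) (hne : (oddSet G p.1 p.2).Nonempty) :
    swapPair G p =
      ((p.1 \ bComp G p.1 p.2 hne.choose) ∪ (bComp G p.1 p.2 hne.choose ∩ p.2),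
       (p.2 \ bComp G p.1 p.2 hne.choose) ∪ (bComp G p.1 p.2 hne.choose ∩ p.1)) :=
  dif_pos hne

lemma swapPair_neg (p : Finset V × Finset V) (hne : ¬ (oddSet G p.1 p.2).Nonempty) :
    swapPair G p = p :=
  dif_neg hne

lemma choose_mem_oddSet {S T : Finset V} (hne : (oddSet G S T).Nonempty) :
    Odd (ecnt G (bComp G S T hne.choose ∩ S) (bComp G S T hne.choose ∩ T)) := by
  have := hne.choose_spec
  simp only [oddSet, Finset.mem_filter] at this
  exact this.2

lemma even_of_oddSet_empty {S T : Finset V} (hne : ¬ (oddSet G S T).Nonempty) :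
    Even (ecnt G S T) := by
  rw [← Nat.not_odd_iff_even]
  intro hodd
  obtain ⟨w, hw⟩ := exists_odd_component G hodd
  exact hne ⟨w, by rw [oddSet, Finset.mem_filter]; exact ⟨Finset.mem_univ w, hw⟩⟩

lemma swapPair_swapPair {p : Finset V × Finset V} (hS : IsIndep G p.1) (hT : IsIndep G p.2) :
    swapPair G (swapPair G p) = p := by
  by_cases hne : (oddSet G p.1 p.2).Nonempty
  · set w0 := hne.choose with hw0
    set C := bComp G p.1 p.2 w0 with hCdef
    have hq := swapPair_pos G p hne
    rw [hq]
    have hodds : oddSet G ((p.1 \ C) ∪ (C ∩ p.2)) ((p.2 \ C) ∪ (C ∩ p.1))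
        = oddSet G p.1 p.2 := oddSet_swap G hS hT w0
    have hne2 : (oddSet G ((p.1 \ C) ∪ (C ∩ p.2)) ((p.2 \ C) ∪ (C ∩ p.1))).Nonempty := by
      rw [hodds]
      exact hne
    have hq2 := swapPair_pos G ((p.1 \ C) ∪ (C ∩ p.2), (p.2 \ C) ∪ (C ∩ p.1)) hne2
    have hmin : hne2.choose = w0 := choose_congr hodds hne2 hne
    rw [hmin] at hq2
    have hbc : bComp G ((p.1 \ C) ∪ (C ∩ p.2)) ((p.2 \ C) ∪ (C ∩ p.1)) w0 = C :=
      bComp_swap G hS hT w0 w0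
    rw [hbc] at hq2
    rw [hq2, swap_swap p.1 p.2 C, swap_swap p.2 p.1 C]
  · rw [swapPair_neg G p hne, swapPair_neg G p hne]

lemma indep_pair_of_eqvgen {A B : Finset V} (hAB : Relation.EqvGen (TokenSlide G) A B) :
    A = B ∨ (IsIndep G A ∧ IsIndep G B) := by
  induction hAB with
  | rel x y hxy => exact Or.inr ⟨hxy.1, hxy.2.1⟩
  | refl x => exact Or.inl rfl
  | symm x y hxy ih =>
    rcases ih with rfl | ⟨h1, h2⟩
    · exact Or.inl rfl
    · exact Or.inr ⟨h2, h1⟩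
  | trans x y z hxy hyz ih1 ih2 =>
    rcases ih1 with rfl | ⟨h1, h2⟩
    · exact ih2
    · rcases ih2 with rfl | ⟨h3, h4⟩
      · exact Or.inr ⟨h1, h2⟩
      · exact Or.inr ⟨h1, h4⟩

end Assemble


/-- Theorem 1(i): for a claw-free graph with an operator realization, the token-sliding
charges commute. -/
theorem tokenCharges_commute {V : Type u} [Fintype V] [DecidableEq V] (G : SimpleGraph V)
    (hcf : ClawFree G) (d : ℕ) (hd : 0 < d)
    (h : V → Matrix (Fin d) (Fin d) ℂ) (b : V → ℝ) (hb : ∀ v, b v ≠ 0)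
    (hsq : ∀ v, h v * h v = ((b v : ℂ)) ^ 2 • (1 : Matrix (Fin d) (Fin d) ℂ))
    (hanti : ∀ u v, G.Adj u v → h u * h v = -(h v * h u))
    (hcomm : ∀ u v, u ≠ v → ¬ G.Adj u v → h u * h v = h v * h u)
    (k l : ℕ) (μ ν : Finset (Finset V))
    (hμ : IsTokenClass G k μ) (hν : IsTokenClass G l ν) :
    tokenCharge h μ * tokenCharge h ν = tokenCharge h ν * tokenCharge h μ := by
  obtain ⟨S₀, hS₀i, _, hμmem⟩ := hμ
  obtain ⟨T₀, hT₀i, _, hνmem⟩ := hν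
  have hμind : ∀ S ∈ μ, IsIndep G S := by
    intro S hSmu
    rcases indep_pair_of_eqvgen G ((hμmem S).1 hSmu) with rfl | ⟨_, h2⟩
    · exact hS₀i
    · exact h2
  have hνind : ∀ T ∈ ν, IsIndep G T := by
    intro T hTmu
    rcases indep_pair_of_eqvgen G ((hνmem T).1 hTmu) with rfl | ⟨_, h2⟩
    · exact hT₀i
    · exact h2
  have key : ∑ p ∈ μ ×ˢ ν,
      (hProd h p.1 * hProd h p.2 - hProd h p.2 * hProd h p.1) = 0 := by
    refine Finset.sum_involution (fun p _ => swapPair G p) ?_ ?_ ?_ ?_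
    · intro p hp
      rw [Finset.mem_product] at hp
      have hS := hμind p.1 hp.1
      have hT := hνind p.2 hp.2
      by_cases hne : (oddSet G p.1 p.2).Nonempty
      · rw [swapPair_pos G p hne]
        have hodd := choose_mem_oddSet G hne
        have c1 := hProd_cancel G h hanti hcomm hS hT hne.choose hodd
        have c2 := hProd_cancel G h hanti hcomm hT hS hne.choose
          (by rw [bComp_comm G p.1 p.2, ecnt_comm]; exact hodd)
        rw [bComp_comm G p.1 p.2] at c2
        rw [c1, c2]
        abel
      · rw [swapPair_neg G p hne]
        have heven := even_of_oddSet_empty G hne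
        rw [hProd_comm_of_even G h hanti hcomm hS hT heven]
        simp
    · intro p hp hfne
      rw [Finset.mem_product] at hp
      have hS := hμind p.1 hp.1
      have hT := hνind p.2 hp.2
      by_cases hne : (oddSet G p.1 p.2).Nonempty
      · intro heq
        have hodd := choose_mem_oddSet G hne
        have hne0 : ecnt G (bComp G p.1 p.2 hne.choose ∩ p.1)
            (bComp G p.1 p.2 hne.choose ∩ p.2) ≠ 0 := by
          intro h0
          rw [h0] at hodd
          simp at hodd
        obtain ⟨x, hx, y, hy, hxy⟩ := exists_adj_of_ecnt_ne_zero G hne0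
        have hyS : y ∉ p.1 := fun hyS => hS x (Finset.mem_inter.1 hx).2 y hyS hxy
        have hyS' : y ∈ (p.1 \ bComp G p.1 p.2 hne.choose) ∪
            (bComp G p.1 p.2 hne.choose ∩ p.2) := Finset.mem_union_right _ hy
        have hfst := congrArg Prod.fst heq
        rw [swapPair_pos G p hne] at hfst
        dsimp only at hfst
        rw [hfst] at hyS'
        exact hyS hyS'
      · exact absurd (by
          rw [hProd_comm_of_even G h hanti hcomm hS hT (even_of_oddSet_empty G hne)]
          exact sub_self _) hfne
    · intro p hp
      rw [Finset.mem_product] at hp ⊢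
      have hS := hμind p.1 hp.1
      have hT := hνind p.2 hp.2
      by_cases hne : (oddSet G p.1 p.2).Nonempty
      · rw [swapPair_pos G p hne]
        have hodd := choose_mem_oddSet G hne
        constructor
        · refine (hμmem _).2 (Relation.EqvGen.trans _ _ _ ((hμmem p.1).1 hp.1) ?_)
          exact reach_aux G hcf p.2 hT (bComp G p.1 p.2 hne.choose).card p.1
            hne.choose hS le_rfl hodd
        · refine (hνmem _).2 (Relation.EqvGen.trans _ _ _ ((hνmem p.2).1 hp.2) ?_)
          have hodd2 : Odd (ecnt G (bComp G p.2 p.1 hne.choose ∩ p.2)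
              (bComp G p.2 p.1 hne.choose ∩ p.1)) := by
            rw [bComp_comm G p.1 p.2, ecnt_comm]
            exact hodd
          have hr := reach_aux G hcf p.1 hS (bComp G p.2 p.1 hne.choose).card p.2
            hne.choose hT le_rfl hodd2
          rw [bComp_comm G p.1 p.2] at hr
          exact hr
      · rw [swapPair_neg G p hne]
        exact hp
    · intro p hp
      rw [Finset.mem_product] at hp
      exact swapPair_swapPair G (hμind p.1 hp.1) (hνind p.2 hp.2)
  have expand1 : tokenCharge h μ * tokenCharge h ν
      = ∑ S ∈ μ, ∑ T ∈ ν, hProd h S * hProd h T := by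
    rw [tokenCharge, tokenCharge, Finset.sum_mul_sum]
  have expand2 : tokenCharge h ν * tokenCharge h μ
      = ∑ S ∈ μ, ∑ T ∈ ν, hProd h T * hProd h S := by
    rw [tokenCharge, tokenCharge, Finset.sum_mul_sum, Finset.sum_comm]
  rw [expand1, expand2, ← sub_eq_zero]
  rw [Finset.sum_product] at key
  simp only [← Finset.sum_sub_distrib]
  exact key
end

section
/- Let G = (V, E) be a finite simple claw-free graph and let S and S' be independent sets of G. Then the induced subgraph G[S Δ S'] on the symmetric difference S Δ S' is a bipartite graph of maximum degree at most two: no two vertices of S \ S' are adjacent, no two vertices of S' \ S are adjacent, and every vertex of S Δ S' has at most two neighbors lying in S Δ S'. (Lemma 1.) -/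
/-!
Every vertex of `S Δ S'` lies in one of the two independent sets, so its neighbours inside
`S Δ S'` all lie in the other one. They are therefore pairwise non-adjacent neighbours of a
common vertex, and claw-freeness allows at most two of them.
-/

open scoped Classical

universe u

open Finset

variable {V : Type u} {G : SimpleGraph V}

theorem IsIndep.mono {S T : Finset V} (hS : IsIndep G S) (hTS : T ⊆ S) : IsIndep G T :=
  fun u hu v hv => hS u (hTS hu) v (hTS hv)

theorem IsIndep.filter_adj_subset [DecidableEq V] {S S' T : Finset V} {v : V}
    (hS : IsIndep G S) (hv : v ∈ S) (hT : T ⊆ S ∪ S') : T.filter (G.Adj v) ⊆ S' := by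
  intro u hu
  obtain ⟨huT, hvu⟩ := mem_filter.1 hu
  exact (mem_union.1 (hT huT)).resolve_left fun huS => hS v hv u huS hvu

theorem ClawFree.card_le_two_of_isIndep (hcf : ClawFree G) {v : V} {N : Finset V}
    (hN : ∀ u ∈ N, G.Adj v u) (hind : IsIndep G N) : #N ≤ 2 := by
  by_contra! h
  obtain ⟨x, hx, y, hy, z, hz, hxy, hxz, hyz⟩ := two_lt_card.1 h
  exact hcf ⟨v, x, y, z, hxy, hxz, hyz, hN x hx, hN y hy, hN z hz,
    hind x hx y hy, hind x hx z hz, hind y hy z hz⟩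

theorem symmDiff_indep_bipartite_maxDegree_le_two_general {V : Type u} [DecidableEq V]
    (G : SimpleGraph V) (hcf : ClawFree G) (S S' : Finset V)
    (hS : IsIndep G S) (hS' : IsIndep G S') :
    (∀ u ∈ S \ S', ∀ v ∈ S \ S', ¬ G.Adj u v) ∧
    (∀ u ∈ S' \ S, ∀ v ∈ S' \ S, ¬ G.Adj u v) ∧
    (∀ v ∈ (S \ S') ∪ (S' \ S),
      (((S \ S') ∪ (S' \ S)).filter fun u => G.Adj v u).card ≤ 2) := by
  refine ⟨hS.mono sdiff_subset, hS'.mono sdiff_subset, fun v hv => ?_⟩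
  have hsub : (S \ S') ∪ (S' \ S) ⊆ S ∪ S' := union_subset_union sdiff_subset sdiff_subset
  refine hcf.card_le_two_of_isIndep (fun u hu => (mem_filter.1 hu).2) ?_
  rcases mem_union.1 hv with hv | hv
  · exact hS'.mono (hS.filter_adj_subset (mem_sdiff.1 hv).1 hsub)
  · exact hS.mono (hS'.filter_adj_subset (mem_sdiff.1 hv).1 (hsub.trans (union_comm S S').subset))

/-- Lemma 1: in a claw-free graph, the subgraph induced on the symmetric difference of two
independent sets is bipartite with maximum degree at most two. -/
theorem symmDiff_indep_bipartite_maxDegree_le_two {V : Type u} [Fintype V] [DecidableEq V]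
    (G : SimpleGraph V) (hcf : ClawFree G) (S S' : Finset V)
    (hS : IsIndep G S) (hS' : IsIndep G S') :
    (∀ u ∈ S \ S', ∀ v ∈ S \ S', ¬ G.Adj u v) ∧
    (∀ u ∈ S' \ S, ∀ v ∈ S' \ S, ¬ G.Adj u v) ∧
    (∀ v ∈ (S \ S') ∪ (S' \ S),
      (((S \ S') ∪ (S' \ S)).filter fun u => G.Adj v u).card ≤ 2) :=
  symmDiff_indep_bipartite_maxDegree_le_two_general G hcf S S' hS hS'
end

section
/- Let G = (V, E) be a finite simple claw-free graph, let C ⊆ V induce a cycle of length at least 4, and let j ∉ C. Then either j has at most four neighbors in C, or |C| = 5 and j is adjacent to all five vertices of C. (Part of Lemma 2.) -/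
open scoped Classical

universe u

/-- `C` induces a cycle of length at least 4 in `G`: it has at least four vertices, the
induced subgraph is connected, and every vertex of `C` has exactly two neighbors in `C`. -/
def IsHole {V : Type u} [DecidableEq V] (G : SimpleGraph V) (C : Finset V) : Prop :=
  4 ≤ C.card ∧ (G.induce (C : Set V)).Connected ∧
    ∀ v ∈ C, (C.filter fun u => G.Adj v u).card = 2

/-- Along a walk in the induced graph on `C`, membership in a "closed" set `X` is preserved. -/
lemma walk_closed {V : Type u} [DecidableEq V] (G : SimpleGraph V) (C : Finset V)
    (X : Finset V)
    (hclosed : ∀ v ∈ X, ∀ u ∈ C, G.Adj v u → u ∈ X) :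
    ∀ {a b : (C : Set V)} (_ : (G.induce (C : Set V)).Walk a b),
      (a : V) ∈ X → (b : V) ∈ X := by
  intro a b p
  induction p with
  | nil => exact id
  | @cons u c w h p ih =>
    intro ha
    exact ih (hclosed _ ha _ (Finset.mem_coe.mp c.2) h)

/-- A nonempty closed subset of a connected hole is the whole hole. -/
lemma closed_eq {V : Type u} [DecidableEq V] (G : SimpleGraph V) (C : Finset V)
    (hconn : (G.induce (C : Set V)).Connected)
    (X : Finset V) (hXC : X ⊆ C)
    (x₀ : V) (hx₀ : x₀ ∈ X)
    (hclosed : ∀ v ∈ X, ∀ u ∈ C, G.Adj v u → u ∈ X) :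
    C ⊆ X := by
  intro u hu
  have hx₀C : x₀ ∈ C := hXC hx₀
  obtain ⟨p⟩ := hconn ⟨x₀, Finset.mem_coe.mpr hx₀C⟩ ⟨u, Finset.mem_coe.mpr hu⟩
  exact walk_closed G C X hclosed p hx₀

/-- Part of Lemma 2: a vertex outside an induced cycle of a claw-free graph has at most four
neighbors in the cycle, unless the cycle has five vertices all adjacent to it. -/
theorem neighbors_in_hole_le_four {V : Type u} [Fintype V] [DecidableEq V]
    (G : SimpleGraph V) (hcf : ClawFree G) (C : Finset V) (hC : IsHole G C)
    (j : V) (hj : j ∉ C) :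
    (C.filter fun v => G.Adj j v).card ≤ 4 ∨ (C.card = 5 ∧ ∀ v ∈ C, G.Adj j v) := by
  obtain ⟨hcard, hconn, hdeg⟩ := hC
  set N := C.filter fun v => G.Adj j v with hNdef
  by_cases hle : N.card ≤ 4
  · exact Or.inl hle
  push_neg at hle
  have h5 : 5 ≤ N.card := hle
  have hNsub : N ⊆ C := Finset.filter_subset _ _
  have hadjj : ∀ v ∈ N, G.Adj j v := fun v hv => (Finset.mem_filter.mp hv).2
  have htrip : ∀ x ∈ N, ∀ y ∈ N, ∀ z ∈ N, x ≠ y → x ≠ z → y ≠ z →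
      G.Adj x y ∨ G.Adj x z ∨ G.Adj y z := by
    intro x hx y hy z hz hxy hxz hyz
    by_contra hcon
    push_neg at hcon
    exact hcf ⟨j, x, y, z, hxy, hxz, hyz, hadjj x hx, hadjj y hy, hadjj z hz,
      hcon.1, hcon.2.1, hcon.2.2⟩
  -- the two `C`-neighbors of a vertex of `C` are determined
  have key : ∀ a ∈ C, ∀ b ∈ C, ∀ c ∈ C, b ≠ c → G.Adj a b → G.Adj a c →
      C.filter (fun u => G.Adj a u) = {b, c} := by
    intro a ha b hb c hc hbc hab hac
    refine (Finset.eq_of_subset_of_card_le ?_ ?_).symm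
    · intro u hu
      rcases Finset.mem_insert.mp hu with h | h
      · subst h; exact Finset.mem_filter.mpr ⟨hb, hab⟩
      · have h' := Finset.mem_singleton.mp h; subst h'
        exact Finset.mem_filter.mpr ⟨hc, hac⟩
    · rw [hdeg a ha, Finset.card_insert_of_notMem (by simpa using hbc),
        Finset.card_singleton]
  -- a triangle in C yields a contradiction
  have htriangle : ∀ x ∈ C, ∀ y ∈ C, ∀ z ∈ C, x ≠ y → x ≠ z → y ≠ z →
      G.Adj x y → G.Adj x z → G.Adj y z → False := by
    intro x hx y hy z hz hxy hxz hyz axy axz ayz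
    have hclosedT : ∀ v ∈ ({x, y, z} : Finset V), ∀ u ∈ C, G.Adj v u →
        u ∈ ({x, y, z} : Finset V) := by
      intro v hv u hu hadj
      simp only [Finset.mem_insert, Finset.mem_singleton] at hv
      rcases hv with rfl | rfl | rfl
      · have := key v hx y hy z hz hyz axy axz
        have hu' : u ∈ ({y, z} : Finset V) := this ▸ Finset.mem_filter.mpr ⟨hu, hadj⟩
        simp only [Finset.mem_insert, Finset.mem_singleton] at hu'
        rcases hu' with rfl | rfl <;> simp
      · have := key v hy x hx z hz hxz axy.symm ayz
        have hu' : u ∈ ({x, z} : Finset V) := this ▸ Finset.mem_filter.mpr ⟨hu, hadj⟩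
        simp only [Finset.mem_insert, Finset.mem_singleton] at hu'
        rcases hu' with rfl | rfl <;> simp
      · have := key v hz x hx y hy hxy axz.symm ayz.symm
        have hu' : u ∈ ({x, y} : Finset V) := this ▸ Finset.mem_filter.mpr ⟨hu, hadj⟩
        simp only [Finset.mem_insert, Finset.mem_singleton] at hu'
        rcases hu' with rfl | rfl <;> simp
    have hTC : ({x, y, z} : Finset V) ⊆ C := by
      intro u hu
      simp only [Finset.mem_insert, Finset.mem_singleton] at hu
      rcases hu with rfl | rfl | rfl <;> assumption
    have hCsub : C ⊆ ({x, y, z} : Finset V) :=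
      closed_eq G C hconn _ hTC x (by simp) hclosedT
    have h3 : C.card ≤ 3 := by
      calc C.card ≤ ({x, y, z} : Finset V).card := Finset.card_le_card hCsub
        _ ≤ 3 := by
          refine (Finset.card_insert_le _ _).trans ?_
          simp [Finset.card_insert_le]
          exact Nat.lt_of_le_of_lt (Finset.card_insert_le _ _) (by simp)
    omega
  -- a vertex of N with low degree inside N yields a contradiction
  have hlow : ∀ v ∈ N, (N.filter fun u => G.Adj v u).card + 4 ≤ N.card → False := by
    intro v hv hvd
    set M := N.filter fun u => ¬(G.Adj v u ∨ u = v) with hMdef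
    have hsplit := Finset.card_filter_add_card_filter_not
      (s := N) (p := fun u => G.Adj v u ∨ u = v)
    have hP : (N.filter fun u => G.Adj v u ∨ u = v).card ≤
        (N.filter fun u => G.Adj v u).card + 1 := by
      have hsub : (N.filter fun u => G.Adj v u ∨ u = v) ⊆
          (N.filter fun u => G.Adj v u) ∪ {v} := by
        intro u hu
        obtain ⟨huN, h | h⟩ := Finset.mem_filter.mp hu
        · exact Finset.mem_union_left _ (Finset.mem_filter.mpr ⟨huN, h⟩)
        · exact Finset.mem_union_right _ (by simp [h])
      calc (N.filter fun u => G.Adj v u ∨ u = v).card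
          ≤ ((N.filter fun u => G.Adj v u) ∪ {v}).card := Finset.card_le_card hsub
        _ ≤ (N.filter fun u => G.Adj v u).card + 1 := by
            refine (Finset.card_union_le _ _).trans ?_
            simp
    have hM3 : 2 < M.card := by
      have : M.card = (N.filter fun u => ¬(G.Adj v u ∨ u = v)).card := by rw [hMdef]
      omega
    obtain ⟨x, hx, y, hy, z, hz, hxy, hxz, hyz⟩ := Finset.two_lt_card.mp hM3
    have hxM := Finset.mem_filter.mp hx
    have hyM := Finset.mem_filter.mp hy
    have hzM := Finset.mem_filter.mp hz
    push_neg at hxM hyM hzM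
    obtain ⟨hxN, hvx, hxv⟩ := hxM
    obtain ⟨hyN, hvy, hyv⟩ := hyM
    obtain ⟨hzN, hvz, hzv⟩ := hzM
    have axy : G.Adj x y := by
      rcases htrip v hv x hxN y hyN (Ne.symm hxv) (Ne.symm hyv) hxy with h | h | h
      · exact absurd h hvx
      · exact absurd h hvy
      · exact h
    have axz : G.Adj x z := by
      rcases htrip v hv x hxN z hzN (Ne.symm hxv) (Ne.symm hzv) hxz with h | h | h
      · exact absurd h hvx
      · exact absurd h hvz
      · exact h
    have ayz : G.Adj y z := by
      rcases htrip v hv y hyN z hzN (Ne.symm hyv) (Ne.symm hzv) hyz with h | h | h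
      · exact absurd h hvy
      · exact absurd h hvz
      · exact h
    exact htriangle x (hNsub hxN) y (hNsub hyN) z (hNsub hzN) hxy hxz hyz axy axz ayz
  -- degree inside N is at most 2
  have hdegN : ∀ v ∈ N, (N.filter fun u => G.Adj v u).card ≤ 2 := by
    intro v hv
    calc (N.filter fun u => G.Adj v u).card
        ≤ (C.filter fun u => G.Adj v u).card :=
          Finset.card_le_card (Finset.filter_subset_filter _ hNsub)
      _ = 2 := hdeg v (hNsub hv)
  by_cases hall : ∀ v ∈ N, (N.filter fun u => G.Adj v u).card = 2
  · -- every vertex of N has both cycle-neighbors in N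
    by_cases h6 : 6 ≤ N.card
    · obtain ⟨v, hv⟩ := Finset.card_pos.mp (by omega : 0 < N.card)
      have hd2 := hdegN v hv
      exact (hlow v hv (by omega)).elim
    · have hN5 : N.card = 5 := by omega
      have hclosedN : ∀ v ∈ N, ∀ u ∈ C, G.Adj v u → u ∈ N := by
        intro v hv u hu hadj
        have heq : N.filter (fun u => G.Adj v u) = C.filter (fun u => G.Adj v u) :=
          Finset.eq_of_subset_of_card_le
            (Finset.filter_subset_filter _ hNsub)
            (by rw [hall v hv, hdeg v (hNsub hv)])
        have : u ∈ N.filter fun u => G.Adj v u := heq ▸ Finset.mem_filter.mpr ⟨hu, hadj⟩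
        exact (Finset.mem_filter.mp this).1
      obtain ⟨v, hv⟩ := Finset.card_pos.mp (by omega : 0 < N.card)
      have hCN : C ⊆ N := closed_eq G C hconn N hNsub v hv hclosedN
      have hCeq : C = N := Finset.Subset.antisymm hCN hNsub
      refine Or.inr ⟨by rw [hCeq]; exact hN5, ?_⟩
      intro u hu
      exact hadjj u (hCN hu)
  · push_neg at hall
    obtain ⟨v, hv, hne⟩ := hall
    have hd2 := hdegN v hv
    exact (hlow v hv (by omega)).elim
end

section
/- Let G = (V, E) be a finite simple claw-free graph, let C ⊆ V induce a cycle of length at least 4, and let j ∉ C be a vertex with an odd number of neighbors in C. Then either |C| = 5 and j is adjacent to all five vertices of C, or j has exactly three neighbors in C and these are three consecutive vertices of the cycle, i.e., the set of neighbors of j in C is {u, k, v} where u and v are the two neighbors of k within C. (Part of Lemma 2, cases (b.i) and (b.ii).) -/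
open scoped Classical

universe u

/-! Inside a hole every triangle would be closed under cycle-adjacency, so by connectivity it
would be the whole cycle: holes are triangle-free. Let `A` be the set of neighbours of `j` on `C`
and `x ∈ A`. A claw at `x` (with `j` and the two cycle-neighbours of `x`) shows that `x` has a
neighbour in `A`, so `|A| ≠ 1`. A claw at `j` shows that the vertices of `A \ N[x]` are pairwise
adjacent, so there are at most two of them. Hence `|A| ≤ 1 + 2 + 2`, i.e. `|A| ∈ {3, 5}`. If
`|A| = 3`, some vertex of `A` is adjacent to the other two; if `|A| = 5`, equality forces both
cycle-neighbours of each `x ∈ A` into `A`, and connectivity gives `A = C`. -/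

open Finset

lemma SimpleGraph.subset_of_induce_connected {V : Type u} {G : SimpleGraph V} {s S : Set V}
    (hconn : (G.induce s).Connected) {x : V} (hx : x ∈ s) (hxS : x ∈ S)
    (hcl : ∀ y ∈ S, ∀ z ∈ s, G.Adj y z → z ∈ S) : s ⊆ S := by
  suffices ∀ c : s, c.1 ∈ S from fun c hc => this ⟨c, hc⟩
  intro c
  induction (SimpleGraph.reachable_iff_reflTransGen _ _).mp
    (hconn.preconnected ⟨x, hx⟩ c) with
  | refl => exact hxS
  | tail _ hab ih => exact hcl _ ih _ (Subtype.property _) hab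

lemma ClawFree.isClique_neighborSet_sdiff {V : Type u} {G : SimpleGraph V} (hcf : ClawFree G)
    {j x : V} (hjx : G.Adj j x) : G.IsClique (G.neighborSet j \ insert x (G.neighborSet x)) := by
  rintro s ⟨hjs, hs⟩ t ⟨hjt, ht⟩ hst
  simp only [Set.mem_insert_iff, SimpleGraph.mem_neighborSet, not_or] at hs ht
  by_contra hnst
  exact hcf ⟨j, x, s, t, Ne.symm hs.1, Ne.symm ht.1, hst, hjx, hjs, hjt, hs.2, ht.2, hnst⟩

lemma SimpleGraph.exists_eq_triple_of_card_eq_three {V : Type u} [DecidableEq V]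
    {G : SimpleGraph V} {s : Finset V} (hs : s.card = 3) (h : ∀ x ∈ s, ∃ y ∈ s, G.Adj x y) :
    ∃ u k v, u ≠ v ∧ G.Adj k u ∧ G.Adj k v ∧ s = {u, k, v} := by
  obtain ⟨x, y, z, hxy, hxz, hyz, rfl⟩ := card_eq_three.mp hs
  wlog hadj : G.Adj x y generalizing y z
  · obtain ⟨w, hw, hxw⟩ := h x (by simp)
    simp only [mem_insert, mem_singleton] at hw
    rcases hw with rfl | rfl | rfl
    · exact absurd hxw (G.irrefl)
    · exact absurd hxw hadj
    · obtain ⟨u, k, v, huv, hku, hkv, heq⟩ :=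
        this w y hxz hxy hyz.symm (by rwa [pair_comm]) (by rwa [pair_comm]) hxw
      exact ⟨u, k, v, huv, hku, hkv, by rw [← heq, pair_comm]⟩
  obtain ⟨w, hw, hzw⟩ := h z (by simp)
  simp only [mem_insert, mem_singleton] at hw
  rcases hw with rfl | rfl | rfl
  · exact ⟨y, w, z, hyz, hadj, hzw.symm, by rw [insert_comm]⟩
  · exact ⟨x, w, z, hxz, hadj.symm, hzw.symm, rfl⟩
  · exact absurd hzw (G.irrefl)

namespace IsHole

variable {V : Type u} [DecidableEq V] {G : SimpleGraph V} {C : Finset V}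

lemma filter_adj_eq_pair (hC : IsHole G C) {x a b : V} (hx : x ∈ C) (ha : a ∈ C) (hb : b ∈ C)
    (hab : a ≠ b) (hxa : G.Adj x a) (hxb : G.Adj x b) :
    C.filter (fun u => G.Adj x u) = {a, b} :=
  (eq_of_subset_of_card_le (by simp [insert_subset_iff, *])
    (by rw [hC.2.2 x hx, card_pair hab])).symm

lemma not_adj_of_adj_of_adj (hC : IsHole G C) {x a b : V} (hx : x ∈ C) (ha : a ∈ C)
    (hb : b ∈ C) (hxa : G.Adj x a) (hxb : G.Adj x b) : ¬ G.Adj a b := by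
  intro hab
  have hcl : ∀ y ∈ ({x, a, b} : Finset V), ∀ z ∈ C, G.Adj y z →
      z ∈ ({x, a, b} : Finset V) := by
    intro y hy z hz hyz
    have hmem : z ∈ C.filter (fun u => G.Adj y u) := mem_filter.mpr ⟨hz, hyz⟩
    simp only [mem_insert, mem_singleton] at hy
    rcases hy with rfl | rfl | rfl
    · rw [hC.filter_adj_eq_pair hx ha hb hab.ne hxa hxb] at hmem
      simp only [mem_insert, mem_singleton] at hmem ⊢; tauto
    · rw [hC.filter_adj_eq_pair ha hx hb hxb.ne hxa.symm hab] at hmem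
      simp only [mem_insert, mem_singleton] at hmem ⊢; tauto
    · rw [hC.filter_adj_eq_pair hb hx ha hxa.ne hxb.symm hab.symm] at hmem
      simp only [mem_insert, mem_singleton] at hmem ⊢; tauto
  have hCsub := SimpleGraph.subset_of_induce_connected (S := (({x, a, b} : Finset V) : Set V))
    hC.2.1 (by exact_mod_cast hx) (by simp) (by exact_mod_cast hcl)
  have := hC.1.trans ((card_le_card (by exact_mod_cast hCsub)).trans card_le_three)
  omega

lemma card_le_two_of_isClique (hC : IsHole G C) {t : Finset V} (ht : t ⊆ C)
    (htc : G.IsClique (t : Set V)) : t.card ≤ 2 := by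
  by_contra h
  obtain ⟨a, ha, b, hb, c, hc, hab, hac, hbc⟩ := two_lt_card.mp (not_le.mp h)
  exact hC.not_adj_of_adj_of_adj (ht ha) (ht hb) (ht hc) (htc ha hb hab) (htc ha hc hac)
    (htc hb hc hbc)

variable {j : V}

lemma exists_adj_of_mem_filter_adj (hC : IsHole G C) (hcf : ClawFree G) (hj : j ∉ C) {x : V}
    (hx : x ∈ C.filter fun v => G.Adj j v) :
    ∃ y ∈ C.filter (fun v => G.Adj j v), G.Adj x y := by
  obtain ⟨hxC, hjx⟩ := mem_filter.mp hx
  obtain ⟨a, b, hab, hpair⟩ := card_eq_two.mp (hC.2.2 x hxC)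
  have ha : a ∈ C.filter fun u => G.Adj x u := by simp [hpair]
  have hb : b ∈ C.filter fun u => G.Adj x u := by simp [hpair]
  rw [mem_filter] at ha hb
  by_contra! hnone
  have hja : ¬ G.Adj j a := fun h => hnone a (mem_filter.mpr ⟨ha.1, h⟩) ha.2
  have hjb : ¬ G.Adj j b := fun h => hnone b (mem_filter.mpr ⟨hb.1, h⟩) hb.2
  exact hcf ⟨x, j, a, b, fun h => hj (h ▸ ha.1), fun h => hj (h ▸ hb.1), hab, hjx.symm, ha.2,
    hb.2, hja, hjb, hC.not_adj_of_adj_of_adj hxC ha.1 hb.1 ha.2 hb.2⟩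

lemma card_filter_adj_le_add_three (hC : IsHole G C) (hcf : ClawFree G) {x : V}
    (hx : x ∈ C.filter fun v => G.Adj j v) :
    (C.filter fun v => G.Adj j v).card ≤
      ((C.filter fun v => G.Adj j v).filter fun y => G.Adj x y).card + 3 := by
  have hclique : G.IsClique
      ((((C.filter fun v => G.Adj j v).filter fun y => ¬ G.Adj x y).erase x : Finset V) :
        Set V) := by
    refine (hcf.isClique_neighborSet_sdiff (mem_filter.mp hx).2).subset fun y hy => ?_
    simp only [mem_coe, mem_erase, mem_filter] at hy
    simp [hy.1, hy.2.1.2, hy.2.2]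
  have hle := hC.card_le_two_of_isClique
    ((erase_subset _ _).trans ((filter_subset _ _).trans (filter_subset _ _))) hclique
  have hsplit : ((C.filter fun v => G.Adj j v).filter fun y => G.Adj x y).card +
      ((C.filter fun v => G.Adj j v).filter fun y => ¬ G.Adj x y).card =
        (C.filter fun v => G.Adj j v).card := by
    convert card_filter_add_card_filter_not (fun y => G.Adj x y)
  have herase := pred_card_le_card_erase
    (s := (C.filter fun v => G.Adj j v).filter fun y => ¬ G.Adj x y) (a := x)
  omega

lemma card_filter_adj_eq_three_or_five (hC : IsHole G C) (hcf : ClawFree G) (hj : j ∉ C)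
    (hodd : Odd (C.filter fun v => G.Adj j v).card) :
    (C.filter fun v => G.Adj j v).card = 3 ∨ (C.filter fun v => G.Adj j v).card = 5 := by
  obtain ⟨x, hx⟩ := card_pos.mp hodd.pos
  obtain ⟨y, hy, hxy⟩ := hC.exists_adj_of_mem_filter_adj hcf hj hx
  have hgt : 1 < (C.filter fun v => G.Adj j v).card :=
    one_lt_card.mpr ⟨x, hx, y, hy, G.ne_of_adj hxy⟩
  have hle := hC.card_filter_adj_le_add_three hcf hx
  have hnbrs := card_le_card (filter_subset_filter (fun y => G.Adj x y)
    (filter_subset (fun v => G.Adj j v) C))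
  rw [hC.2.2 x (mem_filter.mp hx).1] at hnbrs
  obtain ⟨m, hm⟩ := hodd
  omega

lemma filter_adj_eq_self_of_card_eq_five (hC : IsHole G C) (hcf : ClawFree G)
    (h5 : (C.filter fun v => G.Adj j v).card = 5) : C.filter (fun v => G.Adj j v) = C := by
  have hcl : ∀ x ∈ C.filter (fun v => G.Adj j v), ∀ z ∈ C, G.Adj x z →
      z ∈ C.filter (fun v => G.Adj j v) := by
    intro x hx z hz hxz
    have hle := hC.card_filter_adj_le_add_three hcf hx
    have hnbrs := filter_subset_filter (fun y => G.Adj x y) (filter_subset (fun v => G.Adj j v) C)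
    have heq := eq_of_subset_of_card_le hnbrs (by rw [hC.2.2 x (mem_filter.mp hx).1]; omega)
    exact (mem_filter.mp (heq ▸ mem_filter.mpr ⟨hz, hxz⟩)).1
  obtain ⟨x, hx⟩ := card_pos.mp (by rw [h5]; norm_num)
  refine (filter_subset _ _).antisymm ?_
  exact_mod_cast SimpleGraph.subset_of_induce_connected hC.2.1 (mem_filter.mp hx).1
    (S := ((C.filter fun v => G.Adj j v : Finset V) : Set V)) hx (by exact_mod_cast hcl)

end IsHole

theorem odd_neighbors_in_hole_general {V : Type u} [DecidableEq V]
    (G : SimpleGraph V) (hcf : ClawFree G) (C : Finset V) (hC : IsHole G C)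
    (j : V) (hj : j ∉ C) (hodd : Odd (C.filter fun v => G.Adj j v).card) :
    (C.card = 5 ∧ ∀ v ∈ C, G.Adj j v) ∨
    (∃ u k v : V, u ∈ C ∧ k ∈ C ∧ v ∈ C ∧ u ≠ v ∧ G.Adj k u ∧ G.Adj k v ∧
      C.filter (fun w => G.Adj j w) = {u, k, v}) := by
  rcases hC.card_filter_adj_eq_three_or_five hcf hj hodd with h3 | h5
  · right
    obtain ⟨u, k, v, huv, hku, hkv, heq⟩ := SimpleGraph.exists_eq_triple_of_card_eq_three h3
      fun x hx => hC.exists_adj_of_mem_filter_adj hcf hj hx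
    have hsub : ({u, k, v} : Finset V) ⊆ C := heq ▸ filter_subset _ _
    exact ⟨u, k, v, hsub (by simp), hsub (by simp), hsub (by simp), huv, hku, hkv, heq⟩
  · left
    have hall := hC.filter_adj_eq_self_of_card_eq_five hcf h5
    exact ⟨hall ▸ h5, fun v hv => (mem_filter.mp (hall.symm ▸ hv)).2⟩

/-- Part of Lemma 2 (cases (b.i) and (b.ii)): if a vertex `j` outside an induced cycle `C` of a
claw-free graph has an odd number of neighbors in `C`, then either `C` has five vertices all
adjacent to `j`, or `j` has exactly three neighbors in `C`, which are three consecutive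
vertices of the cycle. -/
theorem odd_neighbors_in_hole {V : Type u} [Fintype V] [DecidableEq V]
    (G : SimpleGraph V) (hcf : ClawFree G) (C : Finset V) (hC : IsHole G C)
    (j : V) (hj : j ∉ C) (hodd : Odd (C.filter fun v => G.Adj j v).card) :
    (C.card = 5 ∧ ∀ v ∈ C, G.Adj j v) ∨
    (∃ u k v : V, u ∈ C ∧ k ∈ C ∧ v ∈ C ∧ u ≠ v ∧ G.Adj k u ∧ G.Adj k v ∧
      C.filter (fun w => G.Adj j w) = {u, k, v}) :=
  odd_neighbors_in_hole_general G hcf C hC j hj hodd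
end

section
/- Let G = (V, E) be a finite simple claw-free graph and let C ⊆ V induce a cycle of even length 2k with k > 2. Let a₀ ∈ C and let b₀, b₁ be the two neighbors of a₀ within C. Let s ∉ C be a vertex whose neighbors in C are exactly {b₀, a₀, b₁}, and let t ∉ C ∪ {s} be a vertex adjacent to exactly one of the two vertices s and a₀. Then t is adjacent to exactly one of the two vertices b₀ and b₁. (Corollary 4.) -/
open scoped Classical

universe u

lemma induce_closure {V : Type u} [DecidableEq V] (G : SimpleGraph V) (C S : Finset V)
    (hconn : (G.induce (C : Set V)).Connected) (hSC : S ⊆ C) (a : V) (ha : a ∈ S)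
    (hclosed : ∀ v ∈ S, ∀ u ∈ C, G.Adj v u → u ∈ S) : C ⊆ S := by
  intro u hu
  have key : ∀ x y : (C : Set V), (G.induce (C : Set V)).Walk x y → x.1 ∈ S → y.1 ∈ S := by
    intro x y w
    induction w with
    | nil => exact fun h => h
    | cons h p ih =>
      intro hx
      exact ih (hclosed _ hx _ (by simp) h)
  obtain ⟨w⟩ := hconn.preconnected ⟨a, hSC ha⟩ ⟨u, hu⟩
  exact key _ _ w ha

lemma nbr_exact {V : Type u} [DecidableEq V] (G : SimpleGraph V) (C : Finset V) (v x y : V)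
    (hdeg : (C.filter fun u => G.Adj v u).card = 2) (hx : x ∈ C) (hy : y ∈ C)
    (hxy : x ≠ y) (hax : G.Adj v x) (hay : G.Adj v y) :
    ∀ u ∈ C, G.Adj v u → u = x ∨ u = y := by
  have hsub : ({x, y} : Finset V) ⊆ C.filter fun u => G.Adj v u := by
    intro u hu
    simp only [Finset.mem_insert, Finset.mem_singleton] at hu
    rcases hu with rfl | rfl <;> simp [hx, hy, hax, hay]
  have heq : ({x, y} : Finset V) = C.filter fun u => G.Adj v u :=
    Finset.eq_of_subset_of_card_le hsub (by rw [hdeg, Finset.card_pair hxy])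
  intro u hu hadj
  have : u ∈ ({x, y} : Finset V) := by rw [heq]; simp [hu, hadj]
  simpa using this

lemma other_nbr {V : Type u} [DecidableEq V] (G : SimpleGraph V) (C : Finset V) (v a : V)
    (hdeg : (C.filter fun u => G.Adj v u).card = 2) (ha : a ∈ C) (hva : G.Adj v a) :
    ∃ c, c ∈ C ∧ G.Adj v c ∧ c ≠ a ∧ ∀ u ∈ C, G.Adj v u → u = a ∨ u = c := by
  obtain ⟨p, q, hpq, hfil⟩ := Finset.card_eq_two.mp hdeg
  have hamem : a ∈ ({p, q} : Finset V) := by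
    rw [← hfil]; simp [ha, hva]
  simp only [Finset.mem_insert, Finset.mem_singleton] at hamem
  have hmem : ∀ u, u ∈ ({p, q} : Finset V) → u ∈ C ∧ G.Adj v u := by
    intro u hu; rw [← hfil] at hu; simpa using hu
  rcases hamem with rfl | rfl
  · refine ⟨q, (hmem q (by simp)).1, (hmem q (by simp)).2, hpq.symm, ?_⟩
    intro u hu hadj
    have : u ∈ ({a, q} : Finset V) := by rw [← hfil]; simp [hu, hadj]
    simpa using this
  · refine ⟨p, (hmem p (by simp)).1, (hmem p (by simp)).2, hpq, ?_⟩
    intro u hu hadj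
    have : u ∈ ({p, a} : Finset V) := by rw [← hfil]; simp [hu, hadj]
    have := (by simpa using this : u = p ∨ u = a)
    tauto

set_option maxHeartbeats 1600000

/-- Corollary 4: let `C` induce a cycle of even length `2k` with `k > 2` in a claw-free graph,
let `b₀, a₀, b₁` be consecutive vertices of `C`, let `s ∉ C` have neighbors in `C` exactly
`{b₀, a₀, b₁}`, and let `t ∉ C ∪ {s}` be adjacent to exactly one of `s` and `a₀`.  Then `t`
is adjacent to exactly one of `b₀` and `b₁`. -/
theorem clone_neighbor_exactly_one {V : Type u} [Fintype V] [DecidableEq V]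
    (G : SimpleGraph V) (hcf : ClawFree G) (C : Finset V) (k : ℕ)
    (hC : IsHole G C) (hcard : C.card = 2 * k) (hk : 2 < k)
    (a₀ b₀ b₁ : V) (ha₀ : a₀ ∈ C) (hb₀ : b₀ ∈ C) (hb₁ : b₁ ∈ C) (hbne : b₀ ≠ b₁)
    (hab₀ : G.Adj a₀ b₀) (hab₁ : G.Adj a₀ b₁)
    (s : V) (hs : s ∉ C) (hsnbr : C.filter (fun w => G.Adj s w) = {b₀, a₀, b₁})
    (t : V) (ht : t ∉ C) (hts : t ≠ s)
    (hone : (G.Adj t s ∧ ¬ G.Adj t a₀) ∨ (¬ G.Adj t s ∧ G.Adj t a₀)) :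
    (G.Adj t b₀ ∧ ¬ G.Adj t b₁) ∨ (¬ G.Adj t b₀ ∧ G.Adj t b₁) := by
  obtain ⟨hcard4, hconn, hdeg⟩ := hC
  have hC6 : 6 ≤ C.card := by omega
  have htb₀ : t ≠ b₀ := fun h => ht (h ▸ hb₀)
  have htb₁ : t ≠ b₁ := fun h => ht (h ▸ hb₁)
  have hta₀ : t ≠ a₀ := fun h => ht (h ▸ ha₀)
  have hsb₀ : G.Adj s b₀ := by
    have : b₀ ∈ C.filter (fun w => G.Adj s w) := by rw [hsnbr]; simp
    exact (Finset.mem_filter.mp this).2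
  have hsb₁ : G.Adj s b₁ := by
    have : b₁ ∈ C.filter (fun w => G.Adj s w) := by rw [hsnbr]; simp
    exact (Finset.mem_filter.mp this).2
  have hsnbr' : ∀ u ∈ C, G.Adj s u → u = b₀ ∨ u = a₀ ∨ u = b₁ := by
    intro u hu hadj
    have : u ∈ C.filter (fun w => G.Adj s w) := by simp [hu, hadj]
    rw [hsnbr] at this; simpa using this
  have ha₀nbr : ∀ u ∈ C, G.Adj a₀ u → u = b₀ ∨ u = b₁ :=
    nbr_exact G C a₀ b₀ b₁ (hdeg a₀ ha₀) hb₀ hb₁ hbne hab₀ hab₁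
  have ha₀b₀ : a₀ ≠ b₀ := hab₀.ne
  have ha₀b₁ : a₀ ≠ b₁ := hab₁.ne
  -- b₀ and b₁ are non-adjacent
  have hbb : ¬ G.Adj b₀ b₁ := by
    intro hadj
    have hclosed : ∀ v ∈ ({a₀, b₀, b₁} : Finset V), ∀ u ∈ C, G.Adj v u →
        u ∈ ({a₀, b₀, b₁} : Finset V) := by
      intro v hv u hu hvu
      simp only [Finset.mem_insert, Finset.mem_singleton] at hv ⊢
      rcases hv with h | h | h <;> rw [h] at hvu
      · rcases ha₀nbr u hu hvu with rfl | rfl <;> tauto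
      · rcases nbr_exact G C b₀ a₀ b₁ (hdeg b₀ hb₀) ha₀ hb₁ ha₀b₁ hab₀.symm hadj u hu hvu
          with rfl | rfl <;> tauto
      · rcases nbr_exact G C b₁ a₀ b₀ (hdeg b₁ hb₁) ha₀ hb₀ ha₀b₀ hab₁.symm hadj.symm u hu hvu
          with rfl | rfl <;> tauto
    have hsub : C ⊆ ({a₀, b₀, b₁} : Finset V) :=
      induce_closure G C _ hconn (by
        intro x hx
        simp only [Finset.mem_insert, Finset.mem_singleton] at hx
        rcases hx with rfl | rfl | rfl <;> assumption) a₀ (by simp) hclosed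
    have := Finset.card_le_card hsub
    have h1 := Finset.card_insert_le a₀ ({b₀, b₁} : Finset V)
    have h2 := Finset.card_insert_le b₀ ({b₁} : Finset V)
    have h3 : ({b₁} : Finset V).card = 1 := Finset.card_singleton _
    omega
  -- t is adjacent to at least one of b₀, b₁
  have hor : G.Adj t b₀ ∨ G.Adj t b₁ := by
    by_contra h
    push_neg at h
    obtain ⟨h0, h1⟩ := h
    rcases hone with ⟨hts', hta⟩ | ⟨hts', hta⟩
    · exact hcf ⟨s, t, b₀, b₁, htb₀, htb₁, hbne, hts'.symm, hsb₀, hsb₁, h0, h1, hbb⟩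
    · exact hcf ⟨a₀, t, b₀, b₁, htb₀, htb₁, hbne, hta.symm, hab₀, hab₁, h0, h1, hbb⟩
  -- t is not adjacent to both
  have hnand : ¬ (G.Adj t b₀ ∧ G.Adj t b₁) := by
    rintro ⟨htb0, htb1⟩
    obtain ⟨c₀, hc₀C, hb₀c₀, hc₀a₀, hb₀ex⟩ := other_nbr G C b₀ a₀ (hdeg b₀ hb₀) ha₀ hab₀.symm
    obtain ⟨c₁, hc₁C, hb₁c₁, hc₁a₀, hb₁ex⟩ := other_nbr G C b₁ a₀ (hdeg b₁ hb₁) ha₀ hab₁.symm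
    have hc₀b₁ : c₀ ≠ b₁ := fun h => hbb (h ▸ hb₀c₀)
    have hc₁b₀ : c₁ ≠ b₀ := fun h => hbb (h ▸ hb₁c₁).symm
    have hc₀b₀ : c₀ ≠ b₀ := fun h => hb₀c₀.ne h.symm
    have hc₁b₁ : c₁ ≠ b₁ := fun h => hb₁c₁.ne h.symm
    have ha₀c₀ : ¬ G.Adj a₀ c₀ := by
      intro h; rcases ha₀nbr c₀ hc₀C h with rfl | rfl
      · exact hc₀b₀ rfl
      · exact hc₀b₁ rfl
    have ha₀c₁ : ¬ G.Adj a₀ c₁ := by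
      intro h; rcases ha₀nbr c₁ hc₁C h with rfl | rfl
      · exact hc₁b₀ rfl
      · exact hc₁b₁ rfl
    have hsc₀ : ¬ G.Adj s c₀ := by
      intro h; rcases hsnbr' c₀ hc₀C h with rfl | rfl | rfl
      · exact hc₀b₀ rfl
      · exact hc₀a₀ rfl
      · exact hc₀b₁ rfl
    have hsc₁ : ¬ G.Adj s c₁ := by
      intro h; rcases hsnbr' c₁ hc₁C h with rfl | rfl | rfl
      · exact hc₁b₀ rfl
      · exact hc₁a₀ rfl
      · exact hc₁b₁ rfl
    have hsc₀' : s ≠ c₀ := fun h => hs (h ▸ hc₀C)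
    have hsc₁' : s ≠ c₁ := fun h => hs (h ▸ hc₁C)
    have htc₀' : t ≠ c₀ := fun h => ht (h ▸ hc₀C)
    have htc₁' : t ≠ c₁ := fun h => ht (h ▸ hc₁C)
    -- pick x adjacent to t and y not adjacent to t among {s, a₀}
    obtain ⟨x, htx, hxc0, hxc1, hxnec0, hxnec1⟩ :
        ∃ x, G.Adj t x ∧ ¬ G.Adj x c₀ ∧ ¬ G.Adj x c₁ ∧ x ≠ c₀ ∧ x ≠ c₁ := by
      rcases hone with ⟨h1, _⟩ | ⟨_, h2⟩
      · exact ⟨s, h1, hsc₀, hsc₁, hsc₀', hsc₁'⟩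
      · exact ⟨a₀, h2, ha₀c₀, ha₀c₁, hc₀a₀.symm, hc₁a₀.symm⟩
    obtain ⟨y, hyb0, hyb1, hty, hyc0, hyc1, htyne, hync0, hync1⟩ :
        ∃ y, G.Adj b₀ y ∧ G.Adj b₁ y ∧ ¬ G.Adj t y ∧ ¬ G.Adj y c₀ ∧ ¬ G.Adj y c₁ ∧
          t ≠ y ∧ y ≠ c₀ ∧ y ≠ c₁ := by
      rcases hone with ⟨_, h1⟩ | ⟨h2, _⟩
      · exact ⟨a₀, hab₀.symm, hab₁.symm, h1, ha₀c₀, ha₀c₁, hta₀, hc₀a₀.symm, hc₁a₀.symm⟩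
      · exact ⟨s, hsb₀.symm, hsb₁.symm, h2, hsc₀, hsc₁, hts, hsc₀', hsc₁'⟩
    -- t is adjacent to c₀ and to c₁
    have htc₀ : G.Adj t c₀ := by
      by_contra h
      exact hcf ⟨b₀, t, y, c₀, htyne, htc₀', hync0, htb0.symm, hyb0, hb₀c₀, hty, h, hyc0⟩
    have htc₁ : G.Adj t c₁ := by
      by_contra h
      exact hcf ⟨b₁, t, y, c₁, htyne, htc₁', hync1, htb1.symm, hyb1, hb₁c₁, hty, h, hyc1⟩
    -- c₀ ≠ c₁ and c₀ ≁ c₁ via the closure argument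
    have hkey : ∀ (S : Finset V), a₀ ∈ S → S ⊆ C → S.card ≤ 5 →
        (∀ v ∈ S, ∀ u ∈ C, G.Adj v u → u ∈ S) → False := by
      intro S haS hSC hS5 hclosed
      have := Finset.card_le_card (induce_closure G C S hconn hSC a₀ haS hclosed)
      omega
    have hcc : c₀ ≠ c₁ := by
      rintro rfl
      refine hkey {a₀, b₀, b₁, c₀} (by simp) ?_ ?_ ?_
      · intro x hx
        simp only [Finset.mem_insert, Finset.mem_singleton] at hx
        rcases hx with rfl | rfl | rfl | rfl <;> assumption
      · have h1 := Finset.card_insert_le a₀ ({b₀, b₁, c₀} : Finset V)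
        have h2 := Finset.card_insert_le b₀ ({b₁, c₀} : Finset V)
        have h3 := Finset.card_insert_le b₁ ({c₀} : Finset V)
        have h4 : ({c₀} : Finset V).card = 1 := Finset.card_singleton _
        omega
      · intro v hv u hu hvu
        simp only [Finset.mem_insert, Finset.mem_singleton] at hv ⊢
        rcases hv with h | h | h | h <;> rw [h] at hvu
        · rcases ha₀nbr u hu hvu with rfl | rfl <;> tauto
        · rcases hb₀ex u hu hvu with rfl | rfl <;> tauto
        · rcases hb₁ex u hu hvu with rfl | rfl <;> tauto
        · rcases nbr_exact G C c₀ b₀ b₁ (hdeg c₀ hc₀C) hb₀ hb₁ hbne hb₀c₀.symm hb₁c₁.symm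
            u hu hvu with rfl | rfl <;> tauto
    have hccadj : ¬ G.Adj c₀ c₁ := by
      intro hadj
      refine hkey {a₀, b₀, b₁, c₀, c₁} (by simp) ?_ ?_ ?_
      · intro x hx
        simp only [Finset.mem_insert, Finset.mem_singleton] at hx
        rcases hx with rfl | rfl | rfl | rfl | rfl <;> assumption
      · have h1 := Finset.card_insert_le a₀ ({b₀, b₁, c₀, c₁} : Finset V)
        have h2 := Finset.card_insert_le b₀ ({b₁, c₀, c₁} : Finset V)
        have h3 := Finset.card_insert_le b₁ ({c₀, c₁} : Finset V)
        have h4 := Finset.card_insert_le c₀ ({c₁} : Finset V)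
        have h5 : ({c₁} : Finset V).card = 1 := Finset.card_singleton _
        omega
      · intro v hv u hu hvu
        simp only [Finset.mem_insert, Finset.mem_singleton] at hv ⊢
        rcases hv with h | h | h | h | h <;> rw [h] at hvu
        · rcases ha₀nbr u hu hvu with rfl | rfl <;> tauto
        · rcases hb₀ex u hu hvu with rfl | rfl <;> tauto
        · rcases hb₁ex u hu hvu with rfl | rfl <;> tauto
        · rcases nbr_exact G C c₀ b₀ c₁ (hdeg c₀ hc₀C) hb₀ hc₁C hc₁b₀.symm hb₀c₀.symm hadj
            u hu hvu with rfl | rfl <;> tauto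
        · rcases nbr_exact G C c₁ b₁ c₀ (hdeg c₁ hc₁C) hb₁ hc₀C hc₀b₁.symm hb₁c₁.symm hadj.symm
            u hu hvu with rfl | rfl <;> tauto
    exact hcf ⟨t, x, c₀, c₁, hxnec0, hxnec1, hcc, htx, htc₀, htc₁, hxc0, hxc1, hccadj⟩
  tauto
end

section
/- Let G = (V, E) be a finite simple claw-free graph, let C₀ be an even hole of G, and let t be a vertex in the closed neighborhood N[C₀]. Then t lies in the closed neighborhood N[C] for every even hole C in the deformation closure ⟨C₀⟩; equivalently, N[C] = N[C₀] for all C ∈ ⟨C₀⟩. (Lemma 6.) -/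
open scoped Classical

universe u

/-- `C` is an even hole of `G`: it induces a cycle of even length at least 4. -/
def IsEvenHole {V : Type u} [DecidableEq V] (G : SimpleGraph V) (C : Finset V) : Prop :=
  IsHole G C ∧ Even C.card

/-- `L'` is the single-vertex deformation of `L` by a vertex `j ∉ L` whose neighborhood in `L`
consists of a vertex `k` together with the two neighbors of `k` within `L`; then
`L' = (L \ {k}) ∪ {j}`. -/
def SingleVertexDeform {V : Type u} [DecidableEq V] (G : SimpleGraph V)
    (L L' : Finset V) : Prop :=
  ∃ j k, j ∉ L ∧ k ∈ L ∧
    (L.filter fun u => G.Adj j u) = insert k (L.filter fun u => G.Adj k u) ∧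
    (L.filter fun u => G.Adj k u).card = 2 ∧
    L' = insert j (L.erase k)

/-!
A deformation replaces a vertex `k` of a hole `L` by an outside vertex `j` adjacent to exactly
`k` and the two hole-neighbours `u₁, u₂` of `k`, so the result `L'` is again a hole, and a vertex
of `N[L]` can only leave `N[L']` if `k` is its sole link to `L`. Such a vertex `t` is a neighbour
of `k`; as `u₁, u₂` are non-adjacent (a hole of length at least 4 has no triangle), claw-freeness
at `k` forces `t` to be `u₁` or `u₂` or adjacent to one of them, and both stay in `L'`.
-/

open Finset

variable {V : Type u}

def closedNbhd (G : SimpleGraph V) (C : Finset V) : Set V :=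
  {t | t ∈ C ∨ ∃ u ∈ C, G.Adj u t}

theorem ClawFree.eq_or_eq_or_adj_or_adj {G : SimpleGraph V} (hcf : ClawFree G) {c x y z : V}
    (hx : G.Adj c x) (hy : G.Adj c y) (hz : G.Adj c z) (hyz : y ≠ z) (hnyz : ¬ G.Adj y z) :
    x = y ∨ x = z ∨ G.Adj x y ∨ G.Adj x z := by
  by_contra! h
  exact hcf ⟨c, x, y, z, h.1, h.2.1, hyz, hx, hy, hz, h.2.2.1, h.2.2.2, hnyz⟩

theorem SimpleGraph.Connected.subset_of_adj_closed {G : SimpleGraph V} {s S : Set V}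
    (hconn : (G.induce s).Connected) {a : V} (has : a ∈ s) (haS : a ∈ S)
    (hS : ∀ v ∈ S, ∀ x ∈ s, G.Adj v x → x ∈ S) : s ⊆ S := by
  intro b hb
  obtain ⟨p⟩ := hconn.preconnected ⟨a, has⟩ ⟨b, hb⟩
  suffices ∀ {x y : s}, (G.induce s).Walk x y → (x : V) ∈ S → (y : V) ∈ S from this p haS
  intro x y q
  induction q with
  | nil => exact id
  | cons hadj _ ih => exact fun hx => ih (hS _ hx _ (Subtype.property _) hadj)

section Deformation

variable [DecidableEq V] {G : SimpleGraph V}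

theorem mem_and_adj_of_filter_adj_eq_pair {L : Finset V} {k u₁ u₂ : V}
    (hN : L.filter (G.Adj k) = {u₁, u₂}) : (u₁ ∈ L ∧ G.Adj k u₁) ∧ (u₂ ∈ L ∧ G.Adj k u₂) := by
  simp only [← mem_filter, hN, mem_insert, mem_singleton, true_or, or_true, and_self]

theorem IsHole.filter_adj_eq_pair_s10 {L : Finset V} (hL : IsHole G L) {v a b : V} (hv : v ∈ L)
    (ha : a ∈ L) (hb : b ∈ L) (hab : a ≠ b) (hva : G.Adj v a) (hvb : G.Adj v b) :
    L.filter (G.Adj v) = {a, b} := by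
  refine (eq_of_subset_of_card_le ?_ ?_).symm
  · intro x hx
    rcases mem_insert.1 hx with rfl | hx
    · exact mem_filter.2 ⟨ha, hva⟩
    · exact mem_singleton.1 hx ▸ mem_filter.2 ⟨hb, hvb⟩
  · rw [hL.2.2 v hv, card_pair hab]

theorem IsHole.not_adj_of_filter_adj_eq {L : Finset V} (hL : IsHole G L) {k u₁ u₂ : V}
    (hk : k ∈ L) (hN : L.filter (G.Adj k) = {u₁, u₂}) : ¬ G.Adj u₁ u₂ := by
  intro h₁₂
  obtain ⟨⟨hu₁, hk₁⟩, hu₂, hk₂⟩ := mem_and_adj_of_filter_adj_eq_pair hN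
  have hN₁ := hL.filter_adj_eq_pair_s10 hu₁ hk hu₂ hk₂.ne hk₁.symm h₁₂
  have hN₂ := hL.filter_adj_eq_pair_s10 hu₂ hk hu₁ hk₁.ne hk₂.symm h₁₂.symm
  have hclosed : ∀ v ∈ ({k, u₁, u₂} : Finset V), ∀ x ∈ L, G.Adj v x →
      x ∈ ({k, u₁, u₂} : Finset V) := by
    intro v hv x hx hvx
    have hx' : x ∈ L.filter (G.Adj v) := mem_filter.2 ⟨hx, hvx⟩
    simp only [mem_insert, mem_singleton] at hv ⊢
    rcases hv with rfl | rfl | rfl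
    · rw [hN, mem_insert, mem_singleton] at hx'; tauto
    · rw [hN₁, mem_insert, mem_singleton] at hx'; tauto
    · rw [hN₂, mem_insert, mem_singleton] at hx'; tauto
  have hsub : L ⊆ {k, u₁, u₂} := by
    exact_mod_cast hL.2.1.subset_of_adj_closed hk (by simp) hclosed
  have := card_le_card hsub
  have := card_le_three (a := k) (b := u₁) (c := u₂)
  have := hL.1
  omega

theorem adj_iff_of_filter_adj_eq {L : Finset V} {j k v : V}
    (hJ : L.filter (G.Adj j) = insert k (L.filter (G.Adj k))) (hv : v ∈ L) :
    G.Adj j v ↔ v = k ∨ G.Adj k v := by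
  simpa [hv] using congrArg (v ∈ ·) hJ

theorem card_filter_adj_insert_erase {L : Finset V} {j k v : V} (hj : j ∉ L) (hk : k ∈ L)
    (hv : G.Adj v j ↔ G.Adj v k) :
    ((insert j (L.erase k)).filter (G.Adj v)).card = (L.filter (G.Adj v)).card := by
  rw [filter_insert, filter_erase]
  by_cases hvk : G.Adj v k
  · rw [if_pos (hv.2 hvk),
      card_insert_of_notMem fun h => hj (mem_filter.1 (mem_of_mem_erase h)).1,
      card_erase_add_one (mem_filter.2 ⟨hk, hvk⟩)]
  · rw [if_neg (mt hv.1 hvk), erase_eq_of_notMem fun h => hvk (mem_filter.1 h).2]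

theorem connected_induce_insert_erase {L : Finset V} {j k : V}
    (hconn : (G.induce (L : Set V)).Connected) (hk : k ∈ L)
    (hjk : ∀ v ∈ L, G.Adj k v → G.Adj j v) :
    (G.induce (insert j (L.erase k) : Finset V)).Connected := by
  let f : G.induce (L : Set V) →g G.induce (insert j (L.erase k) : Finset V) :=
    { toFun := fun a => if h : (a : V) = k then ⟨j, by simp⟩ else ⟨a, by simp [h]⟩
      map_rel' := by
        rintro ⟨a, ha⟩ ⟨b, hb⟩ hab
        simp only [SimpleGraph.comap_adj, Function.Embedding.coe_subtype] at hab ⊢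
        split_ifs with h₁ h₂ h₂
        · exact absurd (h₁ ▸ h₂ ▸ hab) (G.irrefl)
        · exact hjk b hb (h₁ ▸ hab)
        · exact (hjk a ha (h₂ ▸ hab.symm)).symm
        · exact hab }
  refine hconn.map f ?_
  rintro ⟨x, hx⟩
  rcases mem_insert.1 hx with rfl | hx
  · exact ⟨⟨k, hk⟩, dif_pos rfl⟩
  · obtain ⟨hxk, hxL⟩ := mem_erase.1 hx
    exact ⟨⟨x, hxL⟩, dif_neg hxk⟩

theorem IsHole.deform {L L' : Finset V} (hL : IsHole G L) (hd : SingleVertexDeform G L L') :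
    IsHole G L' := by
  obtain ⟨j, k, hj, hk, hJ, -, rfl⟩ := hd
  have hadj : ∀ v ∈ L, v ≠ k → (G.Adj j v ↔ G.Adj k v) := fun v hv hvk => by
    simpa [hvk] using adj_iff_of_filter_adj_eq hJ hv
  refine ⟨?_, connected_induce_insert_erase hL.2.1 hk
    fun v hv hkv => (hadj v hv hkv.ne.symm).2 hkv, ?_⟩
  · rw [card_insert_of_notMem fun h => hj (mem_of_mem_erase h), card_erase_add_one hk]
    exact hL.1
  · intro v hv
    rcases mem_insert.1 hv with rfl | hv
    · rw [filter_insert, if_neg (G.irrefl), filter_erase, hJ,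
        erase_insert fun h => G.irrefl (mem_filter.1 h).2]
      exact hL.2.2 k hk
    · obtain ⟨hvk, hvL⟩ := mem_erase.1 hv
      rw [card_filter_adj_insert_erase hj hk, hL.2.2 v hvL]
      simpa [G.adj_comm] using hadj v hvL hvk

theorem closedNbhd_subset_insert_erase (hcf : ClawFree G) {L : Finset V} {j k u₁ u₂ : V}
    (hk : k ∈ L) (hjk : G.Adj j k) (hu₁ : u₁ ∈ L) (hu₂ : u₂ ∈ L) (hk₁ : G.Adj k u₁)
    (hk₂ : G.Adj k u₂) (h₁₂ : u₁ ≠ u₂) (hn₁₂ : ¬ G.Adj u₁ u₂) :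
    closedNbhd G L ⊆ closedNbhd G (insert j (L.erase k)) := by
  have hmem : ∀ v ∈ L, v ≠ k → v ∈ insert j (L.erase k) := fun v hv hvk =>
    mem_insert_of_mem (mem_erase.2 ⟨hvk, hv⟩)
  have hvia : ∀ {t} w, w ∈ L → G.Adj k w → t = w ∨ G.Adj t w →
      t ∈ closedNbhd G (insert j (L.erase k)) := by
    rintro t w hw hkw (rfl | htw)
    · exact Or.inl (hmem t hw hkw.ne.symm)
    · exact Or.inr ⟨w, hmem w hw hkw.ne.symm, htw.symm⟩
  rintro t (ht | ⟨u, hu, hut⟩)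
  · by_cases htk : t = k
    · exact Or.inr ⟨j, mem_insert_self _ _, htk ▸ hjk⟩
    · exact Or.inl (hmem t ht htk)
  · by_cases huk : u = k
    · subst huk
      rcases hcf.eq_or_eq_or_adj_or_adj hut hk₁ hk₂ h₁₂ hn₁₂ with h | h | h | h
      · exact hvia u₁ hu₁ hk₁ (Or.inl h)
      · exact hvia u₂ hu₂ hk₂ (Or.inl h)
      · exact hvia u₁ hu₁ hk₁ (Or.inr h)
      · exact hvia u₂ hu₂ hk₂ (Or.inr h)
    · exact Or.inr ⟨u, hmem u hu huk, hut⟩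

theorem IsHole.closedNbhd_subset_of_deform (hcf : ClawFree G) {L L' : Finset V}
    (hL : IsHole G L) (hd : SingleVertexDeform G L L') : closedNbhd G L ⊆ closedNbhd G L' := by
  obtain ⟨j, k, -, hk, hJ, hcard, rfl⟩ := hd
  obtain ⟨u₁, u₂, h₁₂, hN⟩ := card_eq_two.1 hcard
  obtain ⟨⟨hu₁, hk₁⟩, hu₂, hk₂⟩ := mem_and_adj_of_filter_adj_eq_pair hN
  exact closedNbhd_subset_insert_erase hcf hk ((adj_iff_of_filter_adj_eq hJ hk).2 (Or.inl rfl))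
    hu₁ hu₂ hk₁ hk₂ h₁₂ (hL.not_adj_of_filter_adj_eq hk hN)

theorem IsHole.closedNbhd_subset_of_reflTransGen (hcf : ClawFree G) {L L' : Finset V}
    (hL : IsHole G L) (h : Relation.ReflTransGen (SingleVertexDeform G) L L') :
    IsHole G L' ∧ closedNbhd G L ⊆ closedNbhd G L' := by
  induction h with
  | refl => exact ⟨hL, subset_rfl⟩
  | tail _ hd ih => exact ⟨ih.1.deform hd, ih.2.trans (ih.1.closedNbhd_subset_of_deform hcf hd)⟩

end Deformation

theorem mem_closedNbhd_deformClosure_general {V : Type u} [DecidableEq V]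
    (G : SimpleGraph V) (hcf : ClawFree G) (C₀ : Finset V) (hC₀ : IsEvenHole G C₀)
    (t : V) (ht : t ∈ C₀ ∨ ∃ u ∈ C₀, G.Adj u t) :
    ∀ C : Finset V, Relation.ReflTransGen (SingleVertexDeform G) C₀ C → IsEvenHole G C →
      (t ∈ C ∨ ∃ u ∈ C, G.Adj u t) := by
  intro C hC _
  exact (hC₀.1.closedNbhd_subset_of_reflTransGen hcf hC).2 ht

/-- Lemma 6: the closed neighborhood of an even hole is invariant under single-vertex
deformations: if `t` is in the closed neighborhood of `C₀`, then `t` is in the closed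
neighborhood of every even hole in the deformation closure of `C₀`. -/
theorem mem_closedNbhd_deformClosure {V : Type u} [Fintype V] [DecidableEq V]
    (G : SimpleGraph V) (hcf : ClawFree G) (C₀ : Finset V) (hC₀ : IsEvenHole G C₀)
    (t : V) (ht : t ∈ C₀ ∨ ∃ u ∈ C₀, G.Adj u t) :
    ∀ C : Finset V, Relation.ReflTransGen (SingleVertexDeform G) C₀ C → IsEvenHole G C →
      (t ∈ C ∨ ∃ u ∈ C, G.Adj u t) :=
  mem_closedNbhd_deformClosure_general G hcf C₀ hC₀ t ht
end

section
/- Let G = (V, E) be a finite simple claw-free graph containing a simplicial clique K_s, with an operator realization and a simplicial mode χ with respect to K_s. Then for every u ∈ ℂ: T_G(u)·(1 + u·Σ_{j ∈ K_s} h(j))·χ·T_G(−u) = T_G(u)·T_G(−u)·(1 − u·Σ_{j ∈ K_s} h(j))·χ. (Lemma 15, the fundamental identity.) -/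
open scoped Classical

universe u

/-- The transfer operator `T_{G[U]}(u) = Σ_S (−u)^{|S|}·h(S)`, summed over all independent
sets `S ⊆ U` of `G`. -/
noncomputable def transferOp {V : Type u} {d : ℕ} [Fintype V] [DecidableEq V]
    (G : SimpleGraph V) (h : V → Matrix (Fin d) (Fin d) ℂ) (U : Finset V) (u : ℂ) :
    Matrix (Fin d) (Fin d) ℂ :=
  ∑ S ∈ Finset.univ.filter (fun S : Finset V => S ⊆ U ∧ IsIndep G S),
    (-u) ^ S.card • hProd h S

/-- `K` is a simplicial clique of `G`: a clique such that, for every `j ∈ K`, the set of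
neighbors of `j` outside `K` is a clique. -/
def IsSimplicialClique {V : Type u} (G : SimpleGraph V) (K : Finset V) : Prop :=
  (∀ u ∈ K, ∀ v ∈ K, u ≠ v → G.Adj u v) ∧
    ∀ j ∈ K, ∀ u v : V, u ∉ K → v ∉ K → u ≠ v → G.Adj j u → G.Adj j v → G.Adj u v

/-!
Write `T = T_G(−u)`, `H = Σ_{j ∈ K} h j` and `N(j)` for the neighbourhood of `j`. If the
neighbours of `j` inside `U` form a clique, an independent `S ⊆ U` contains at most one of them,
so `h j` commutes or anticommutes with `h(S)`; summing, `h j T_U + T_U h j = 2 h j T_{U ∖ N(j)}`.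
Simpliciality of `K` is exactly what makes this apply to `U = V ∖ K` and its subsets.

Since `K` is a clique, an independent set meets it in at most one vertex, so `T = T₀ + u P` with
`T₀ = T_{V ∖ K}` and `P = Σ_{k ∈ K} h k T_{(V ∖ K) ∖ N(k)}`, and moving `χ` across flips the sign
of `P` only: `χ T = (T₀ − u P) χ`. The identity then reduces to `H T₀ + T₀ H = 2 P` (the
anticommutator formula summed over `K`) and `H P = P H`, which follows from the same formula
because `h j h k + h k h j = 0` for distinct `j, k ∈ K`.
-/

theorem one_add_smul_mul_sub_smul {R A : Type*} [CommRing R] [Ring A] [Algebra R A]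
    {H T P : A} (hHT : H * T + T * H = 2 • P) (hHP : Commute H P) (u : R) :
    (1 + u • H) * (T - u • P) = (T + u • P) * (1 - u • H) := by
  simp only [add_mul, mul_sub, one_mul, mul_one, smul_mul_assoc, mul_smul_comm, smul_add,
    smul_smul]
  rw [eq_sub_of_add_eq' hHT, hHP.eq]
  module

section Products

variable {V : Type u} {d : ℕ} {h : V → Matrix (Fin d) (Fin d) ℂ}

theorem hProd_insert_s13 [DecidableEq V] {S : Finset V} {a : V} (ha : a ∉ S)
    (hS : (↑(insert a S) : Set V).Pairwise fun v w => Commute (h v) (h w)) :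
    hProd h (insert a S) = h a * hProd h S := by
  rw [hProd, dif_pos hS, hProd, dif_pos (hS.mono (by simp)),
    Finset.noncommProd_insert_of_notMem _ _ _ _ ha]

theorem Commute.hProd_right {X : Matrix (Fin d) (Fin d) ℂ} {S : Finset V}
    (hX : ∀ v ∈ S, Commute X (h v)) : Commute X (hProd h S) := by
  unfold hProd
  split_ifs
  · exact Finset.noncommProd_commute _ _ _ _ hX
  · exact Commute.zero_right X

end Products

section Graph

variable {V : Type u} {G : SimpleGraph V} {d : ℕ} {h : V → Matrix (Fin d) (Fin d) ℂ}

theorem IsIndep.pairwise_commute (hcomm : ∀ v w, v ≠ w → ¬ G.Adj v w → h v * h w = h w * h v)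
    {S : Finset V} (hS : IsIndep G S) :
    (S : Set V).Pairwise fun v w => Commute (h v) (h w) :=
  fun v hv w hw hvw => hcomm v w hvw (hS v hv w hw)

theorem IsIndep.insert [DecidableEq V] {S : Finset V} {k : V} (hS : IsIndep G S)
    (hk : ∀ v ∈ S, ¬ G.Adj k v) : IsIndep G (insert k S) := by
  intro v hv w hw hvw
  rw [Finset.mem_insert] at hv hw
  rcases hv with rfl | hv <;> rcases hw with rfl | hw
  · exact G.irrefl hvw
  · exact hk w hw hvw
  · exact hk v hv hvw.symm
  · exact hS v hv w hw hvw

theorem IsIndep.inter_eq_singleton [DecidableEq V] {S K : Finset V} (hS : IsIndep G S)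
    (hK : G.IsClique (K : Set V)) {k : V} (hk : k ∈ S ∩ K) : S ∩ K = {k} := by
  refine Finset.eq_singleton_iff_unique_mem.2 ⟨hk, fun v hv => ?_⟩
  by_contra hvk
  rw [Finset.mem_inter] at hk hv
  exact hS v hv.1 k hk.1 (hK hv.2 hk.2 hvk)

theorem filter_erase_eq_filter_sdiff [DecidableEq V] {K : Finset V}
    (hK : G.IsClique (K : Set V)) (U : Finset V) {k : V} (hk : k ∈ K) :
    (U.erase k).filter (fun v => ¬ G.Adj k v) = (U \ K).filter fun v => ¬ G.Adj k v := by
  ext v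
  simp only [Finset.mem_filter, Finset.mem_erase, Finset.mem_sdiff]
  constructor
  · rintro ⟨⟨hvk, hvU⟩, hkv⟩
    exact ⟨⟨hvU, fun hvK => hkv (hK hk hvK (Ne.symm hvk))⟩, hkv⟩
  · rintro ⟨⟨hvU, hvK⟩, hkv⟩
    exact ⟨⟨fun hvk => hvK (hvk ▸ hk), hvU⟩, hkv⟩

theorem IsSimplicialClique.isClique {K : Finset V} (hK : IsSimplicialClique G K) :
    G.IsClique (K : Set V) :=
  fun a ha b hb hab => hK.1 a ha b hb hab

theorem IsSimplicialClique.isClique_filter_adj {K U : Finset V} (hK : IsSimplicialClique G K)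
    (hUK : Disjoint U K) {j : V} (hj : j ∈ K) : G.IsClique (↑(U.filter (G.Adj j)) : Set V) := by
  intro a ha b hb hab
  rw [Finset.coe_filter, Set.mem_ofPred_eq] at ha hb
  exact hK.2 j hj a b (Finset.disjoint_left.1 hUK ha.1) (Finset.disjoint_left.1 hUK hb.1) hab
    ha.2 hb.2

theorem commute_of_not_adj (hcomm : ∀ v w, v ≠ w → ¬ G.Adj v w → h v * h w = h w * h v)
    {v w : V} (hvw : ¬ G.Adj v w) : Commute (h v) (h w) := by
  by_cases hvw' : v = w
  · exact hvw' ▸ Commute.refl (h v)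
  · exact hcomm v w hvw' hvw

theorem mul_hProd_add_hProd_mul [DecidableEq V]
    (hanti : ∀ v w, G.Adj v w → h v * h w = -(h w * h v))
    (hcomm : ∀ v w, v ≠ w → ¬ G.Adj v w → h v * h w = h w * h v)
    {S : Finset V} (hS : IsIndep G S) {j : V}
    (hj : G.IsClique (↑(S.filter (G.Adj j)) : Set V)) :
    h j * hProd h S + hProd h S * h j =
      if ∀ v ∈ S, ¬ G.Adj j v then 2 • (h j * hProd h S) else 0 := by
  split_ifs with hfree
  · rw [(Commute.hProd_right fun v hv => commute_of_not_adj hcomm (hfree v hv)).eq, two_smul]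
  push Not at hfree
  obtain ⟨w, hwS, hjw⟩ := hfree
  have hrest : ∀ v ∈ S.erase w, Commute (h j) (h v) := fun v hv =>
    commute_of_not_adj hcomm fun hjv => hS v (Finset.mem_of_mem_erase hv) w hwS
      (hj (by simp [Finset.mem_of_mem_erase hv, hjv]) (by simp [hwS, hjw])
        (Finset.ne_of_mem_erase hv))
  have hsplit : hProd h S = h w * hProd h (S.erase w) := by
    conv_lhs => rw [← Finset.insert_erase hwS]
    exact hProd_insert_s13 (Finset.notMem_erase w S)
      (by rw [Finset.insert_erase hwS]; exact hS.pairwise_commute hcomm)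
  rw [hsplit, ← mul_assoc, hanti j w hjw, neg_mul, mul_assoc, mul_assoc,
    (Commute.hProd_right hrest).eq, neg_add_cancel]

end Graph

section Transfer

variable {V : Type u} [Fintype V] [DecidableEq V] {G : SimpleGraph V} {d : ℕ}
  {h : V → Matrix (Fin d) (Fin d) ℂ}

noncomputable def indepSubsets (G : SimpleGraph V) (U : Finset V) : Finset (Finset V) :=
  Finset.univ.filter fun S => S ⊆ U ∧ IsIndep G S

theorem mem_indepSubsets {U S : Finset V} : S ∈ indepSubsets G U ↔ S ⊆ U ∧ IsIndep G S := by
  simp [indepSubsets]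

theorem transferOp_eq_sum (U : Finset V) (x : ℂ) :
    transferOp G h U x = ∑ S ∈ indepSubsets G U, (-x) ^ S.card • hProd h S :=
  rfl

theorem Commute.transferOp_right {X : Matrix (Fin d) (Fin d) ℂ} {U : Finset V}
    (hX : ∀ v ∈ U, Commute X (h v)) (x : ℂ) : Commute X (transferOp G h U x) :=
  Commute.sum_right _ _ _ fun _ hS =>
    (Commute.hProd_right fun v hv => hX v ((mem_indepSubsets.1 hS).1 hv)).smul_right _

theorem mul_transferOp_add_transferOp_mul
    (hanti : ∀ v w, G.Adj v w → h v * h w = -(h w * h v))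
    (hcomm : ∀ v w, v ≠ w → ¬ G.Adj v w → h v * h w = h w * h v)
    {U : Finset V} {j : V} (hU : G.IsClique (↑(U.filter (G.Adj j)) : Set V)) (x : ℂ) :
    h j * transferOp G h U x + transferOp G h U x * h j =
      2 • (h j * transferOp G h (U.filter fun v => ¬ G.Adj j v) x) := by
  simp only [transferOp_eq_sum, Finset.mul_sum, Finset.sum_mul, ← Finset.sum_add_distrib,
    Finset.smul_sum]
  calc
    _ = ∑ S ∈ indepSubsets G U,
        if ∀ v ∈ S, ¬ G.Adj j v then 2 • (h j * ((-x) ^ S.card • hProd h S)) else 0 := by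
      refine Finset.sum_congr rfl fun S hS => ?_
      obtain ⟨hSU, hS⟩ := mem_indepSubsets.1 hS
      rw [mul_smul_comm, smul_mul_assoc, ← smul_add, mul_hProd_add_hProd_mul hanti hcomm hS
        (hU.subset (Finset.coe_subset.2 (Finset.filter_subset_filter _ hSU)))]
      split_ifs <;> simp only [smul_zero, smul_comm (2 : ℕ)]
    _ = _ := by
      rw [← Finset.sum_filter, indepSubsets, indepSubsets, Finset.filter_filter]
      refine Finset.sum_congr (Finset.filter_congr fun S _ => ?_) fun _ _ => rfl
      simp only [Finset.subset_iff, Finset.mem_filter]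
      grind

theorem sum_mul_transferOp_add_transferOp_mul_sum
    (hanti : ∀ v w, G.Adj v w → h v * h w = -(h w * h v))
    (hcomm : ∀ v w, v ≠ w → ¬ G.Adj v w → h v * h w = h w * h v)
    {K U : Finset V} (hU : ∀ j ∈ K, G.IsClique (↑(U.filter (G.Adj j)) : Set V)) (x : ℂ) :
    (∑ j ∈ K, h j) * transferOp G h U x + transferOp G h U x * ∑ j ∈ K, h j =
      2 • ∑ j ∈ K, h j * transferOp G h (U.filter fun v => ¬ G.Adj j v) x := by
  simp only [Finset.sum_mul, Finset.mul_sum, Finset.smul_sum, ← Finset.sum_add_distrib]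
  exact Finset.sum_congr rfl fun j hj => mul_transferOp_add_transferOp_mul hanti hcomm (hU j hj) x

theorem sum_indepSubsets_filter_mem
    (hcomm : ∀ v w, v ≠ w → ¬ G.Adj v w → h v * h w = h w * h v)
    {U : Finset V} {k : V} (hk : k ∈ U) (x : ℂ) :
    ∑ S ∈ (indepSubsets G U).filter (k ∈ ·), (-x) ^ S.card • hProd h S =
      -x • (h k * transferOp G h ((U.erase k).filter fun v => ¬ G.Adj k v) x) := by
  rw [transferOp_eq_sum, Finset.mul_sum, Finset.smul_sum]
  symm
  refine Finset.sum_nbij' (insert k) (Finset.erase · k) ?_ ?_ ?_ ?_ ?_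
  · intro R hR
    obtain ⟨hRU, hR⟩ := mem_indepSubsets.1 hR
    rw [Finset.mem_filter, mem_indepSubsets]
    refine ⟨⟨Finset.insert_subset hk fun v hv => Finset.mem_of_mem_erase
      (Finset.mem_of_mem_filter _ (hRU hv)), hR.insert fun v hv =>
        (Finset.mem_filter.1 (hRU hv)).2⟩, Finset.mem_insert_self k R⟩
  · intro S hS
    obtain ⟨hS, hkS⟩ := Finset.mem_filter.1 hS
    obtain ⟨hSU, hS⟩ := mem_indepSubsets.1 hS
    refine mem_indepSubsets.2 ⟨fun v hv => Finset.mem_filter.2 ⟨Finset.erase_subset_erase k hSU hv,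
      hS k hkS v (Finset.mem_of_mem_erase hv)⟩, fun v hv w hw =>
        hS v (Finset.mem_of_mem_erase hv) w (Finset.mem_of_mem_erase hw)⟩
  · intro R hR
    exact Finset.erase_insert fun hkR =>
      Finset.notMem_erase k U (Finset.mem_of_mem_filter _ ((mem_indepSubsets.1 hR).1 hkR))
  · intro S hS
    exact Finset.insert_erase (Finset.mem_filter.1 hS).2
  · intro R hR
    obtain ⟨hRU, hR⟩ := mem_indepSubsets.1 hR
    have hkR : k ∉ R := fun hkR =>
      Finset.notMem_erase k U (Finset.mem_of_mem_filter _ (hRU hkR))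
    rw [Finset.card_insert_of_notMem hkR, hProd_insert_s13 hkR
      ((hR.insert fun v hv => (Finset.mem_filter.1 (hRU hv)).2).pairwise_commute hcomm),
      pow_succ, mul_comm, mul_smul, mul_smul_comm]

theorem transferOp_eq_sub_sum_clique
    (hcomm : ∀ v w, v ≠ w → ¬ G.Adj v w → h v * h w = h w * h v)
    {K : Finset V} (hK : G.IsClique (K : Set V)) (U : Finset V) (x : ℂ) :
    transferOp G h U x = transferOp G h (U \ K) x -
      x • ∑ k ∈ K ∩ U, h k * transferOp G h ((U \ K).filter fun v => ¬ G.Adj k v) x := by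
  set f : Finset V → Matrix (Fin d) (Fin d) ℂ := fun S => (-x) ^ S.card • hProd h S
  have hsplit : ∀ S ∈ indepSubsets G U,
      f S = (if Disjoint S K then f S else 0) + ∑ k ∈ S ∩ K, f S := by
    intro S hS
    split_ifs with hSK
    · rw [Finset.disjoint_iff_inter_eq_empty.1 hSK, Finset.sum_empty, add_zero]
    · obtain ⟨k, hk⟩ := Finset.not_disjoint_iff_nonempty_inter.1 hSK
      rw [(mem_indepSubsets.1 hS).2.inter_eq_singleton hK hk, Finset.sum_singleton, zero_add]
  have hdisjoint : ∑ S ∈ indepSubsets G U, (if Disjoint S K then f S else 0) =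
      transferOp G h (U \ K) x := by
    rw [← Finset.sum_filter, transferOp_eq_sum, indepSubsets, indepSubsets, Finset.filter_filter]
    refine Finset.sum_congr (Finset.filter_congr fun S _ => ?_) fun _ _ => rfl
    rw [Finset.subset_sdiff, and_right_comm]
  have hmeets : ∑ S ∈ indepSubsets G U, ∑ k ∈ S ∩ K, f S =
      ∑ k ∈ K ∩ U, ∑ S ∈ (indepSubsets G U).filter (k ∈ ·), f S := by
    refine Finset.sum_comm' fun S k => ?_
    simp only [Finset.mem_filter, mem_indepSubsets, Finset.mem_inter]
    constructor
    · rintro ⟨⟨hSU, hS⟩, hkS, hkK⟩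
      exact ⟨⟨⟨hSU, hS⟩, hkS⟩, hkK, hSU hkS⟩
    · rintro ⟨⟨⟨hSU, hS⟩, hkS⟩, hkK, -⟩
      exact ⟨⟨hSU, hS⟩, hkS, hkK⟩
  calc transferOp G h U x = ∑ S ∈ indepSubsets G U, f S := rfl
    _ = _ := by rw [Finset.sum_congr rfl hsplit, Finset.sum_add_distrib, hdisjoint, hmeets]
    _ = _ := by
      rw [sub_eq_add_neg, ← neg_smul, Finset.smul_sum]
      refine congrArg _ (Finset.sum_congr rfl fun k hk => ?_)
      rw [sum_indepSubsets_filter_mem hcomm (Finset.mem_inter.1 hk).2,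
        filter_erase_eq_filter_sdiff hK U (Finset.mem_inter.1 hk).1]

theorem mul_transferOp_eq_of_anticommute
    (hcomm : ∀ v w, v ≠ w → ¬ G.Adj v w → h v * h w = h w * h v)
    {K : Finset V} (hK : G.IsClique (K : Set V)) {X : Matrix (Fin d) (Fin d) ℂ}
    (hXanti : ∀ j ∈ K, X * h j = -(h j * X)) (hXcomm : ∀ v, v ∉ K → X * h v = h v * X)
    (U : Finset V) (x : ℂ) :
    X * transferOp G h U x = (transferOp G h (U \ K) x +
      x • ∑ k ∈ K ∩ U, h k * transferOp G h ((U \ K).filter fun v => ¬ G.Adj k v) x) * X := by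
  have hXU : ∀ W ⊆ U \ K, Commute X (transferOp G h W x) := fun W hW =>
    Commute.transferOp_right (fun v hv => hXcomm v (Finset.mem_sdiff.1 (hW hv)).2) x
  have hterm : ∀ k ∈ K ∩ U,
      X * (h k * transferOp G h ((U \ K).filter fun v => ¬ G.Adj k v) x) =
        -(h k * transferOp G h ((U \ K).filter fun v => ¬ G.Adj k v) x * X) := fun k hk => by
    rw [← mul_assoc, hXanti k (Finset.mem_inter.1 hk).1, neg_mul, mul_assoc,
      (hXU _ (Finset.filter_subset _ _)).eq, mul_assoc]
  rw [transferOp_eq_sub_sum_clique hcomm hK, mul_sub, (hXU _ subset_rfl).eq, mul_smul_comm,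
    Finset.mul_sum, Finset.sum_congr rfl hterm, Finset.sum_neg_distrib, smul_neg,
    sub_neg_eq_add, add_mul, smul_mul_assoc, Finset.sum_mul]

theorem commute_sum_sum_mul_transferOp
    (hanti : ∀ v w, G.Adj v w → h v * h w = -(h w * h v))
    (hcomm : ∀ v w, v ≠ w → ¬ G.Adj v w → h v * h w = h w * h v)
    {K U : Finset V} (hK : G.IsClique (K : Set V))
    (hU : ∀ j ∈ K, G.IsClique (↑(U.filter (G.Adj j)) : Set V)) (x : ℂ) :
    Commute (∑ j ∈ K, h j)
      (∑ k ∈ K, h k * transferOp G h (U.filter fun v => ¬ G.Adj k v) x) := by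
  set R : V → Matrix (Fin d) (Fin d) ℂ := fun k =>
    transferOp G h (U.filter fun v => ¬ G.Adj k v) x
  set R₂ : V → V → Matrix (Fin d) (Fin d) ℂ := fun j k =>
    transferOp G h ((U.filter fun v => ¬ G.Adj k v).filter fun v => ¬ G.Adj j v) x
  have hR₂_comm : ∀ j k, R₂ j k = R₂ k j := fun j k => by simp only [R₂, Finset.filter_comm]
  have hR₂_diag : ∀ k, R₂ k k = R k := fun k => by
    simp only [R₂, R, Finset.filter_filter, and_self]
  have hmove : ∀ j ∈ K, ∀ k, R k * h j = 2 • (h j * R₂ j k) - h j * R k := fun j hj k =>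
    eq_sub_of_add_eq' (mul_transferOp_add_transferOp_mul hanti hcomm
      ((hU j hj).subset (Finset.coe_subset.2 (Finset.filter_subset_filter _
        (Finset.filter_subset _ _)))) x)
  have hanticomm : ∀ j ∈ K, ∀ k ∈ K,
      (h j * h k + h k * h j) * R k = (h j * h k + h k * h j) * R₂ j k := by
    intro j hj k hk
    by_cases hjk : j = k
    · rw [hjk, hR₂_diag]
    · rw [hanti j k (hK hj hk hjk), neg_add_cancel, zero_mul, zero_mul]
  have hsplit : ∑ j ∈ K, ∑ k ∈ K, h j * h k * R k + ∑ j ∈ K, ∑ k ∈ K, h k * h j * R k =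
      ∑ j ∈ K, ∑ k ∈ K, h j * h k * R₂ j k + ∑ j ∈ K, ∑ k ∈ K, h k * h j * R₂ j k := by
    simp only [← Finset.sum_add_distrib, ← add_mul]
    exact Finset.sum_congr rfl fun j hj => Finset.sum_congr rfl fun k hk => hanticomm j hj k hk
  have hswap : ∑ j ∈ K, ∑ k ∈ K, h j * h k * R₂ j k =
      ∑ j ∈ K, ∑ k ∈ K, h k * h j * R₂ j k := by
    rw [Finset.sum_comm]
    simp only [hR₂_comm]
  have hHP : (∑ j ∈ K, h j) * ∑ k ∈ K, h k * R k = ∑ j ∈ K, ∑ k ∈ K, h j * h k * R k := by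
    rw [Finset.sum_mul]
    simp only [Finset.mul_sum, mul_assoc]
  show (∑ j ∈ K, h j) * ∑ k ∈ K, h k * R k = (∑ k ∈ K, h k * R k) * ∑ j ∈ K, h j
  calc (∑ j ∈ K, h j) * ∑ k ∈ K, h k * R k
      = 2 • ∑ j ∈ K, ∑ k ∈ K, h k * h j * R₂ j k - ∑ j ∈ K, ∑ k ∈ K, h k * h j * R k := by
        rw [hHP, eq_sub_iff_add_eq, hsplit, hswap, two_smul]
    _ = ∑ j ∈ K, ∑ k ∈ K, h k * (R k * h j) := by
        simp only [Finset.smul_sum, ← Finset.sum_sub_distrib]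
        refine Finset.sum_congr rfl fun j hj => Finset.sum_congr rfl fun k _ => ?_
        rw [hmove j hj k, mul_sub, mul_smul_comm, mul_assoc, mul_assoc]
    _ = (∑ k ∈ K, h k * R k) * ∑ j ∈ K, h j := by
        rw [Finset.sum_comm, Finset.sum_mul]
        simp only [Finset.mul_sum, mul_assoc]

end Transfer

theorem fundamental_identity_general {V : Type u} [Fintype V] [DecidableEq V]
    (G : SimpleGraph V) (d : ℕ)
    (h : V → Matrix (Fin d) (Fin d) ℂ)
    (hanti : ∀ u v, G.Adj u v → h u * h v = -(h v * h u))
    (hcomm : ∀ u v, u ≠ v → ¬ G.Adj u v → h u * h v = h v * h u)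
    (Ks : Finset V) (hKs : IsSimplicialClique G Ks)
    (χ : Matrix (Fin d) (Fin d) ℂ)
    (hχanti : ∀ j ∈ Ks, χ * h j = -(h j * χ))
    (hχcomm : ∀ v : V, v ∉ Ks → χ * h v = h v * χ)
    (u : ℂ) :
    transferOp G h Finset.univ u *
        ((1 : Matrix (Fin d) (Fin d) ℂ) + u • ∑ j ∈ Ks, h j) * χ *
        transferOp G h Finset.univ (-u) =
      transferOp G h Finset.univ u * transferOp G h Finset.univ (-u) *
        ((1 : Matrix (Fin d) (Fin d) ℂ) - u • ∑ j ∈ Ks, h j) * χ := by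
  have hK := hKs.isClique
  have hU : ∀ j ∈ Ks, G.IsClique (↑((Finset.univ \ Ks).filter (G.Adj j)) : Set V) :=
    fun j => hKs.isClique_filter_adj Finset.sdiff_disjoint
  have hT := transferOp_eq_sub_sum_clique hcomm hK Finset.univ (-u)
  have hχT := mul_transferOp_eq_of_anticommute hcomm hK hχanti hχcomm Finset.univ (-u)
  rw [Finset.inter_univ, neg_smul] at hT hχT
  rw [sub_neg_eq_add] at hT
  rw [← sub_eq_add_neg] at hχT
  have hHT₀ := sum_mul_transferOp_add_transferOp_mul_sum hanti hcomm hU (-u)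
  have hHP := commute_sum_sum_mul_transferOp hanti hcomm hK hU (-u)
  have hcore : (1 + u • ∑ j ∈ Ks, h j) * χ * transferOp G h Finset.univ (-u) =
      transferOp G h Finset.univ (-u) * (1 - u • ∑ j ∈ Ks, h j) * χ := by
    rw [mul_assoc, hχT, ← mul_assoc, hT, one_add_smul_mul_sub_smul hHT₀ hHP]
  simp only [mul_assoc] at hcore ⊢
  rw [hcore]

/-- Lemma 15 (the fundamental identity): for a claw-free graph with a simplicial clique `K_s`,
an operator realization, and a simplicial mode `χ` with respect to `K_s`,
`T_G(u)·(1 + u·Σ_{j ∈ K_s} h(j))·χ·T_G(−u) = T_G(u)·T_G(−u)·(1 − u·Σ_{j ∈ K_s} h(j))·χ`. -/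
theorem fundamental_identity {V : Type u} [Fintype V] [DecidableEq V]
    (G : SimpleGraph V) (hcf : ClawFree G) (d : ℕ) (hd : 0 < d)
    (h : V → Matrix (Fin d) (Fin d) ℂ) (b : V → ℝ) (hb : ∀ v, b v ≠ 0)
    (hsq : ∀ v, h v * h v = ((b v : ℂ)) ^ 2 • (1 : Matrix (Fin d) (Fin d) ℂ))
    (hanti : ∀ u v, G.Adj u v → h u * h v = -(h v * h u))
    (hcomm : ∀ u v, u ≠ v → ¬ G.Adj u v → h u * h v = h v * h u)
    (Ks : Finset V) (hKs : IsSimplicialClique G Ks)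
    (χ : Matrix (Fin d) (Fin d) ℂ) (hχsq : χ * χ = 1)
    (hχanti : ∀ j ∈ Ks, χ * h j = -(h j * χ))
    (hχcomm : ∀ v : V, v ∉ Ks → χ * h v = h v * χ)
    (u : ℂ) :
    transferOp G h Finset.univ u *
        ((1 : Matrix (Fin d) (Fin d) ℂ) + u • ∑ j ∈ Ks, h j) * χ *
        transferOp G h Finset.univ (-u) =
      transferOp G h Finset.univ u * transferOp G h Finset.univ (-u) *
        ((1 : Matrix (Fin d) (Fin d) ℂ) - u • ∑ j ∈ Ks, h j) * χ :=
  fundamental_identity_general G d h hanti hcomm Ks hKs χ hχanti hχcomm u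
end
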